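/- arXiv:math/0602628 — 10 statements merged into one kernel-verified Lean document; each statement's English description precedes it below -/
import Mathlib

section
/- Let K be a compact linearly ordered topological space (with the order topology) and let a, b ∈ K with a < b. Then there exists a continuous increasing (order-preserving) function f : K → [0,1] such that f(a) = 0 and f(b) = 1. -/
/-!
Urysohn's lemma gives a continuous `g : K → [0,1]` that vanishes on `Iic a` and equals `1` on
`Ici b`. Its running maximum `x ↦ sup {g y | y ≤ x}` is increasing and still takes the values
`0` at `a` and `1` at `b`. It is continuous because `{x | c < F x}` is the upper closure of the
open set `{c < g}`, while `{x | F x < c}` is the complement of the upper closure of the closed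
set `{c ≤ g}`, which in a compact linear order is an interval `Ici m`.
-/

open Set

section UpperClosure

variable {X : Type*} [LinearOrder X] [TopologicalSpace X]

lemma isOpen_upperClosure [ClosedIicTopology X] {s : Set X} (hs : IsOpen s) :
    IsOpen (upperClosure s : Set X) := by
  have h : (upperClosure s : Set X) = s ∪ ⋃ y ∈ s, Ioi y := by
    ext x
    simp only [SetLike.mem_coe, mem_upperClosure, mem_union, mem_iUnion₂, mem_Ioi, exists_prop]
    constructor
    · rintro ⟨y, hy, hyx⟩
      rcases hyx.lt_or_eq with hlt | rfl
      exacts [Or.inr ⟨y, hy, hlt⟩, Or.inl hy]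
    · rintro (hx | ⟨y, hy, hyx⟩)
      exacts [⟨x, hx, le_rfl⟩, ⟨y, hy, hyx.le⟩]
  rw [h]
  exact hs.union (isOpen_biUnion fun _ _ => isOpen_Ioi)

lemma isClosed_upperClosure [OrderClosedTopology X] [CompactSpace X] {s : Set X}
    (hs : IsClosed s) : IsClosed (upperClosure s : Set X) := by
  obtain rfl | hne := s.eq_empty_or_nonempty
  · simp
  obtain ⟨m, hm, hmin⟩ := hs.isCompact.exists_isLeast hne
  have h : (upperClosure s : Set X) = Ici m :=
    ext fun x => ⟨fun ⟨_, hy, hyx⟩ => (hmin hy).trans hyx, fun hx => ⟨m, hm, hx⟩⟩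
  rw [h]
  exact isClosed_Ici

end UpperClosure

section RunningSup

variable {K α : Type*} [TopologicalSpace K] [LinearOrder K] [OrderClosedTopology K]
  [CompactSpace K] [ConditionallyCompleteLinearOrder α] [TopologicalSpace α] [OrderTopology α]
  {g : K → α}

noncomputable def runningSup (g : K → α) (x : K) : α :=
  sSup (g '' Iic x)

lemma lt_runningSup_iff (hg : Continuous g) {x : K} {c : α} :
    c < runningSup g x ↔ ∃ y ≤ x, c < g y := by
  have hbdd : BddAbove (g '' Iic x) := isClosed_Iic.isCompact.bddAbove_image hg.continuousOn
  simp [runningSup, lt_csSup_iff hbdd ⟨g x, x, le_rfl, rfl⟩]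

lemma runningSup_le_iff (hg : Continuous g) {x : K} {c : α} :
    runningSup g x ≤ c ↔ ∀ y ≤ x, g y ≤ c := by
  simpa using (lt_runningSup_iff hg (x := x) (c := c)).not

lemma runningSup_lt_iff (hg : Continuous g) {x : K} {c : α} :
    runningSup g x < c ↔ ∀ y ≤ x, g y < c :=
  isClosed_Iic.isCompact.sSup_lt_iff_of_continuous ⟨x, le_rfl⟩ hg.continuousOn c

lemma le_runningSup (hg : Continuous g) {x y : K} (hyx : y ≤ x) : g y ≤ runningSup g x :=
  not_lt.mp fun h => ((runningSup_lt_iff hg).mp h y hyx).false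

lemma monotone_runningSup (hg : Continuous g) : Monotone (runningSup g) :=
  fun _ _ hxy => (runningSup_le_iff hg).mpr fun _ hz => le_runningSup hg (hz.trans hxy)

lemma continuous_runningSup (hg : Continuous g) : Continuous (runningSup g) := by
  refine continuous_iff_lower_upperSemicontinuous.mpr
    ⟨lowerSemicontinuous_iff_isOpen_preimage.mpr fun c => ?_,
      upperSemicontinuous_iff_isOpen_preimage.mpr fun c => ?_⟩
  · have h : runningSup g ⁻¹' Ioi c = upperClosure (g ⁻¹' Ioi c) := by
      ext x
      simp only [mem_preimage, mem_Ioi, lt_runningSup_iff hg, SetLike.mem_coe, mem_upperClosure]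
      exact exists_congr fun _ => and_comm
    rw [h]
    exact isOpen_upperClosure (isOpen_Ioi.preimage hg)
  · have h : runningSup g ⁻¹' Iio c = (upperClosure (g ⁻¹' Ici c) : Set K)ᶜ := by
      ext x
      simp only [mem_preimage, mem_Iio, runningSup_lt_iff hg, mem_compl_iff, SetLike.mem_coe,
        mem_upperClosure, mem_Ici, not_exists, not_and, not_le]
      exact forall_congr' fun _ => by rw [← not_le, ← not_le (b := x)]; exact imp_not_comm
    rw [h]
    exact (isClosed_upperClosure (isClosed_Ici.preimage hg)).isOpen_compl

end RunningSup

/-- For a < b in a compact linearly ordered space K there is a continuous increasing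
function f : K → [0,1] with f(a)=0, f(b)=1. -/
theorem exists_increasing_continuous_sep
    {K : Type*} [TopologicalSpace K] [LinearOrder K] [OrderTopology K] [CompactSpace K]
    (a b : K) (hab : a < b) :
    ∃ f : K → unitInterval, Continuous f ∧ Monotone f ∧ f a = 0 ∧ f b = 1 := by
  obtain ⟨g, hg0, hg1, hg01⟩ := exists_continuous_zero_one_of_isClosed isClosed_Iic isClosed_Ici
    (Iic_disjoint_Ici.mpr hab.not_ge)
  have hFa : runningSup g a = 0 :=
    le_antisymm ((runningSup_le_iff g.continuous).mpr fun _ hy => (hg0 hy).le)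
      ((hg0 self_mem_Iic).symm.trans_le (le_runningSup g.continuous le_rfl))
  have hFb : runningSup g b = 1 :=
    le_antisymm ((runningSup_le_iff g.continuous).mpr fun y _ => (hg01 y).2)
      ((hg1 self_mem_Ici).symm.trans_le (le_runningSup g.continuous le_rfl))
  refine ⟨projIcc 0 1 zero_le_one ∘ runningSup g,
    continuous_projIcc.comp (continuous_runningSup g.continuous),
    (monotone_projIcc _).comp (monotone_runningSup g.continuous), ?_, ?_⟩
  · simp only [Function.comp_apply, hFa, projIcc_left]; rfl
  · simp only [Function.comp_apply, hFb, projIcc_right]; rfl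
end

section
/- Let K be a compact linearly ordered topological space. Then the set of continuous increasing (order-preserving) real-valued functions on K has dense linear span in the Banach space C(K) of continuous real-valued functions with the supremum norm. -/
/-!
The span of the continuous increasing functions is a unital subalgebra of `C(K, ℝ)`: after adding
constants two increasing functions become nonnegative, and then their product is increasing. By
Stone–Weierstrass it remains to separate points `x < y` by a continuous increasing function. Take an
Urysohn function `f` vanishing on `Iic x` and equal to `1` on `Ici y`; its running supremum
`z ↦ sup f(Iic z)` is increasing, continuous since `K` is compact, `0` at `x` and at least `1` at `y`.
-/

open Set Filter Topology

namespace ContinuousMap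

section MonotoneSpan

variable (X : Type*) [TopologicalSpace X] [Preorder X] [CompactSpace X]

theorem mul_mem_span_monotone {f g : C(X, ℝ)} (hf : Monotone f) (hg : Monotone g) :
    f * g ∈ Submodule.span ℝ {h : C(X, ℝ) | Monotone h} := by
  set c := ‖f‖
  set d := ‖g‖
  have hprod : Monotone ⇑((f + const X c) * (g + const X d)) :=
    Monotone.mul (hf.add_const c) (hg.add_const d)
      (fun x => neg_le_iff_add_nonneg.1 (neg_le_of_abs_le (f.norm_coe_le_norm x)))
      (fun x => neg_le_iff_add_nonneg.1 (neg_le_of_abs_le (g.norm_coe_le_norm x)))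
  have hsplit : f * g = (f + const X c) * (g + const X d) - d • f - c • g - (c * d) • 1 := by
    ext x
    simp only [sub_apply, mul_apply, add_apply, const_apply, smul_apply, one_apply, smul_eq_mul]
    ring
  rw [hsplit]
  have hone : Monotone ⇑(1 : C(X, ℝ)) := monotone_const
  exact sub_mem (sub_mem (sub_mem (Submodule.subset_span hprod)
    (Submodule.smul_mem _ _ (Submodule.subset_span hf)))
    (Submodule.smul_mem _ _ (Submodule.subset_span hg)))
    (Submodule.smul_mem _ _ (Submodule.subset_span hone))

noncomputable def monotoneSpan : Subalgebra ℝ C(X, ℝ) :=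
  (Submodule.span ℝ {f : C(X, ℝ) | Monotone f}).toSubalgebra
    (Submodule.subset_span fun _ _ _ => le_rfl) fun {_ _} ha hb => by
      have hle : Submodule.span ℝ {f : C(X, ℝ) | Monotone f} *
          Submodule.span ℝ {f : C(X, ℝ) | Monotone f} ≤
          Submodule.span ℝ {f : C(X, ℝ) | Monotone f} := by
        rw [Submodule.span_mul_span, Submodule.span_le]
        rintro _ ⟨f, hf, g, hg, rfl⟩
        exact mul_mem_span_monotone X hf hg
      exact hle (Submodule.mul_mem_mul ha hb)

end MonotoneSpan

noncomputable def runningSup {K : Type*} [TopologicalSpace K] [LinearOrder K] (f : C(K, ℝ))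
    (z : K) : ℝ :=
  sSup (f '' Iic z)

section LinearOrder

variable {K : Type*} [TopologicalSpace K] [LinearOrder K] [OrderTopology K] [CompactSpace K]

section RunningSup

variable (f : C(K, ℝ))

theorem exists_le_runningSup_eq (z : K) : ∃ p ≤ z, runningSup f z = f p :=
  isClosed_Iic.isCompact.exists_sSup_image_eq nonempty_Iic f.continuous.continuousOn

theorem apply_le_runningSup {q z : K} (hqz : q ≤ z) : f q ≤ runningSup f z :=
  le_csSup (isClosed_Iic.isCompact.image f.continuous).bddAbove (mem_image_of_mem f hqz)

theorem monotone_runningSup : Monotone (runningSup f) := fun z w hzw => by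
  obtain ⟨p, hpz, hp⟩ := exists_le_runningSup_eq f z
  exact hp ▸ apply_le_runningSup f (hpz.trans hzw)

theorem lowerSemicontinuous_runningSup : LowerSemicontinuous (runningSup f) := by
  intro z a ha
  obtain ⟨p, hpz, hp⟩ := exists_le_runningSup_eq f z
  rw [hp] at ha
  rcases hpz.eq_or_lt with rfl | hpz
  · filter_upwards [(isOpen_lt continuous_const f.continuous).mem_nhds ha] with w hw
    exact hw.trans_le (apply_le_runningSup f le_rfl)
  · filter_upwards [isOpen_Ioi.mem_nhds hpz] with w hw
    exact ha.trans_le (apply_le_runningSup f hw.le)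

theorem upperSemicontinuous_runningSup : UpperSemicontinuous (runningSup f) := by
  intro z b hb
  have lt_of_forall_le {w : K} (hw : ∀ p ≤ w, f p < b) : runningSup f w < b := by
    obtain ⟨p, hpw, hp⟩ := exists_le_runningSup_eq f w
    exact hp ▸ hw p hpw
  rcases {w | b ≤ f w}.eq_empty_or_nonempty with hC | hC
  · exact Eventually.of_forall fun w =>
      lt_of_forall_le fun p _ => not_le.1 fun hp => hC.subset hp
  -- `f` first reaches `b` at some `m > z`, and the running supremum stays below `b` before `m`.
  obtain ⟨m, hbm, hm⟩ := (isClosed_le continuous_const f.continuous).isCompact.exists_isLeast hC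
  have hzm : z < m := lt_of_not_ge fun hmz => (hbm.trans (apply_le_runningSup f hmz)).not_gt hb
  filter_upwards [isOpen_Iio.mem_nhds hzm] with w hwm
  exact lt_of_forall_le fun p hpw => not_le.1 fun hp => (hm hp).not_gt (hpw.trans_lt hwm)

theorem continuous_runningSup : Continuous (runningSup f) :=
  continuous_iff_lower_upperSemicontinuous.2
    ⟨lowerSemicontinuous_runningSup f, upperSemicontinuous_runningSup f⟩

end RunningSup

theorem exists_monotone_lt_of_lt {x y : K} (hxy : x < y) :
    ∃ g : C(K, ℝ), Monotone g ∧ g x < g y := by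
  obtain ⟨f, hf0, hf1, -⟩ := exists_continuous_zero_one_of_isClosed isClosed_Iic isClosed_Ici
    (Iic_disjoint_Ici.2 hxy.not_ge)
  refine ⟨⟨runningSup f, continuous_runningSup f⟩, monotone_runningSup f, ?_⟩
  obtain ⟨p, hpx, hp⟩ := exists_le_runningSup_eq f x
  have hx : runningSup f x = 0 := hp.trans (hf0 hpx)
  have hy : 1 ≤ runningSup f y := by
    simpa [hf1 (mem_Ici.2 le_rfl)] using apply_le_runningSup f (le_refl y)
  change runningSup f x < runningSup f y
  linarith

variable (K) in
theorem monotoneSpan_separatesPoints : (monotoneSpan K).SeparatesPoints := by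
  intro x y hxy
  rcases hxy.lt_or_gt with h | h <;> obtain ⟨g, hg, hgxy⟩ := exists_monotone_lt_of_lt h
  · exact ⟨g, ⟨g, Submodule.subset_span hg, rfl⟩, hgxy.ne⟩
  · exact ⟨g, ⟨g, Submodule.subset_span hg, rfl⟩, hgxy.ne'⟩

end LinearOrder

end ContinuousMap

/-- In C(K) for a compact linearly ordered space K, the continuous increasing functions
are linearly dense. -/
theorem increasing_functions_linearly_dense
    {K : Type*} [TopologicalSpace K] [LinearOrder K] [OrderTopology K] [CompactSpace K] :
    (Submodule.span ℝ {f : C(K, ℝ) | Monotone (f : K → ℝ)}).topologicalClosure = ⊤ := by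
  have h := ContinuousMap.subalgebra_topologicalClosure_eq_top_of_separatesPoints _
    (ContinuousMap.monotoneSpan_separatesPoints K)
  apply SetLike.coe_injective
  simpa [Submodule.topologicalClosure_coe, ContinuousMap.monotoneSpan] using congrArg SetLike.coe h
end

section
/- Let X be a topological space with a continuous function h : X → [0,1] and points a < b in a linear order on X generating its topology, with h(a)=0, h(b)=1, h(x)=0 for x ≤ a, and h(x)=1 for x ≥ b. Then the function f defined by f(x) = sup{ h(t) : t ≤ x } is increasing, continuous, and satisfies f(a)=0 and f(b)=1. -/
/-!
Since `h '' Iic x` is the image of the whole compact space under `t ↦ h (min t x)`, the running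
supremum is the supremum over a fixed compact set of a jointly continuous family, hence
continuous. At `a` and `b` the supremum is attained at the endpoint itself.
-/

open Set

theorem Set.image_Iic_eq_image_univ_min {X Y : Type*} [LinearOrder X] (h : X → Y) (x : X) :
    h '' Iic x = (fun t ↦ h (min t x)) '' univ := by
  ext y
  constructor
  · rintro ⟨t, ht, rfl⟩
    exact ⟨t, trivial, congrArg h (min_eq_left ht)⟩
  · rintro ⟨t, -, rfl⟩
    exact ⟨min t x, min_le_right t x, rfl⟩

section RunningSup

variable {X Y : Type*} [LinearOrder X] [ConditionallyCompleteLinearOrder Y] {h : X → Y}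

theorem monotone_sSup_image_Iic (hbdd : BddAbove (range h)) :
    Monotone fun x ↦ sSup (h '' Iic x) := fun _ y hxy ↦
  csSup_le_csSup (hbdd.mono (image_subset_range h (Iic y))) (nonempty_Iic.image h)
    (image_mono (Iic_subset_Iic.2 hxy))

theorem sSup_image_Iic_eq_of_forall_le {x : X} (hx : ∀ t ≤ x, h t ≤ h x) :
    sSup (h '' Iic x) = h x :=
  IsGreatest.csSup_eq ⟨mem_image_of_mem h self_mem_Iic, forall_mem_image.2 hx⟩

theorem continuous_sSup_image_Iic [TopologicalSpace X] [OrderTopology X] [CompactSpace X]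
    [TopologicalSpace Y] [OrderTopology Y] (hc : Continuous h) :
    Continuous fun x ↦ sSup (h '' Iic x) := by
  simp_rw [image_Iic_eq_image_univ_min]
  exact isCompact_univ.continuous_sSup (hc.comp (continuous_snd.min continuous_fst))

end RunningSup

theorem sup_modification_increasing_continuous_general
    {X : Type*} [TopologicalSpace X] [LinearOrder X] [OrderTopology X] [CompactSpace X]
    (h : X → ℝ) (hc : Continuous h) (hrange : ∀ x, h x ∈ Set.Icc (0:ℝ) 1)
    (a b : X) (hb : h b = 1)
    (h0 : ∀ x, x ≤ a → h x = 0)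
    (f : X → ℝ) (hf : ∀ x, f x = sSup (h '' Set.Iic x)) :
    Monotone f ∧ Continuous f ∧ f a = 0 ∧ f b = 1 := by
  obtain rfl : f = fun x ↦ sSup (h '' Iic x) := funext hf
  have ha : h a = 0 := h0 a le_rfl
  refine ⟨monotone_sSup_image_Iic (isCompact_range hc).bddAbove, continuous_sSup_image_Iic hc,
    ?_, ?_⟩
  · exact (sSup_image_Iic_eq_of_forall_le fun t ht ↦ ((h0 t ht).trans ha.symm).le).trans ha
  · exact (sSup_image_Iic_eq_of_forall_le fun t _ ↦ hb ▸ (hrange t).2).trans hb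

/-- Urysohn modification: f(x) = sup { h(t) : t ≤ x } is increasing, continuous,
with f(a)=0 and f(b)=1. -/
theorem sup_modification_increasing_continuous
    {X : Type*} [TopologicalSpace X] [LinearOrder X] [OrderTopology X] [CompactSpace X]
    (h : X → ℝ) (hc : Continuous h) (hrange : ∀ x, h x ∈ Set.Icc (0:ℝ) 1)
    (a b : X) (hab : a < b) (ha : h a = 0) (hb : h b = 1)
    (h0 : ∀ x, x ≤ a → h x = 0) (h1 : ∀ x, b ≤ x → h x = 1)
    (f : X → ℝ) (hf : ∀ x, f x = sSup (h '' Set.Iic x)) :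
    Monotone f ∧ Continuous f ∧ f a = 0 ∧ f b = 1 :=
  sup_modification_increasing_continuous_general h hc hrange a b hb h0 f hf
end

section
/- Let K be a dense-in-itself compact linearly ordered space and define x ∼ y iff the closed interval [min(x,y), max(x,y)] is a scattered topological space. Then ∼ is an equivalence relation on K, each equivalence class is closed and convex, and each equivalence class has at most two elements. -/
/-- A set is scattered if every nonempty subset has a point isolated in it. -/
def IsScatteredSet {K : Type*} [TopologicalSpace K] (S : Set K) : Prop :=
  ∀ T ⊆ S, T.Nonempty → ∃ t ∈ T, ∃ U : Set K, IsOpen U ∧ U ∩ T = {t}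

/-- On a dense-in-itself compact linearly ordered space, x ∼ y iff the interval between
them is scattered is an equivalence relation, with closed convex classes having at most
two elements. -/
theorem scattered_relation_equivalence
    {K : Type*} [TopologicalSpace K] [LinearOrder K] [OrderTopology K] [CompactSpace K]
    (hdense : ∀ x : K, ¬ IsOpen ({x} : Set K))
    (r : K → K → Prop)
    (hr : ∀ x y, r x y ↔ IsScatteredSet (Set.Icc (min x y) (max x y))) :
    Equivalence r ∧
    (∀ x : K, IsClosed {y | r x y}) ∧
    (∀ x a b c : K, r x a → r x c → a ≤ b → b ≤ c → r x b) ∧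
    (∀ x a b c : K, r x a → r x b → r x c → a = b ∨ a = c ∨ b = c) := by
  -- Key characterization: r x y iff the open interval between them is empty.
  have key : ∀ x y : K, r x y ↔ Set.Ioo (min x y) (max x y) = ∅ := by
    intro x y
    rw [hr]
    constructor
    · intro h
      by_contra hne
      obtain ⟨t', ht', U, hU, hUt⟩ :=
        h (Set.Ioo (min x y) (max x y)) Set.Ioo_subset_Icc_self
          (Set.nonempty_iff_ne_empty.2 hne)
      exact hdense t' (hUt ▸ hU.inter isOpen_Ioo)
    · intro h T hT hTne
      have hsub : ∀ z ∈ T, z = min x y ∨ z = max x y := by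
        intro z hz
        obtain ⟨h1, h2⟩ := hT hz
        rcases eq_or_lt_of_le h1 with h1 | h1
        · exact Or.inl h1.symm
        · rcases lt_or_eq_of_le h2 with h2 | h2
          · exact absurd (⟨h1, h2⟩ : z ∈ Set.Ioo (min x y) (max x y))
              (Set.eq_empty_iff_forall_notMem.1 h z)
          · exact Or.inr h2
      rcases eq_or_lt_of_le (min_le_max (a := x) (b := y)) with hab | hab
      · obtain ⟨t, ht⟩ := hTne
        refine ⟨t, ht, Set.univ, isOpen_univ, ?_⟩
        ext z
        simp only [Set.univ_inter, Set.mem_singleton_iff]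
        constructor
        · intro hz
          have h1 := hsub z hz
          have h2 := hsub t ht
          rcases h1 with h1 | h1 <;> rcases h2 with h2 | h2 <;>
            simp [h1, h2, ← hab]
        · rintro rfl; exact ht
      · by_cases hbT : max x y ∈ T
        · refine ⟨max x y, hbT, Set.Ioi (min x y), isOpen_Ioi, ?_⟩
          ext z
          simp only [Set.mem_inter_iff, Set.mem_Ioi, Set.mem_singleton_iff]
          constructor
          · rintro ⟨hz1, hz2⟩
            rcases hsub z hz2 with h' | h'
            · exact absurd (h' ▸ hz1) (lt_irrefl _)
            · exact h'
          · rintro rfl; exact ⟨hab, hbT⟩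
        · obtain ⟨t, ht⟩ := hTne
          have hta : t = min x y := by
            rcases hsub t ht with h' | h'
            · exact h'
            · exact absurd (h' ▸ ht) hbT
          refine ⟨t, ht, Set.univ, isOpen_univ, ?_⟩
          ext z
          simp only [Set.univ_inter, Set.mem_singleton_iff]
          constructor
          · intro hz
            rcases hsub z hz with h' | h'
            · rw [h', hta]
            · exact absurd (h' ▸ hz) hbT
          · rintro rfl; exact ht
  have keyle : ∀ x y : K, x ≤ y → (r x y ↔ Set.Ioo x y = ∅) := by
    intro x y h
    rw [key, min_eq_left h, max_eq_right h]
  have hrefl : ∀ x, r x x := fun x => (key x x).2 (by simp)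
  have hsymm : ∀ {x y}, r x y → r y x := by
    intro x y h
    rw [key] at h ⊢
    rwa [min_comm, max_comm]
  have htrans_aux : ∀ x y z : K, x ≤ z → r x y → r y z → Set.Ioo x z = ∅ := by
    intro x y z hxz hxy hyz
    rw [key] at hxy hyz
    have hy : ∀ s ∈ Set.Ioo x z, s = y := by
      rintro s ⟨hs1, hs2⟩
      rcases lt_trichotomy s y with h | h | h
      · exact absurd (⟨(min_le_left x y).trans_lt hs1, h.trans_le (le_max_right x y)⟩ :
          s ∈ Set.Ioo (min x y) (max x y)) (Set.eq_empty_iff_forall_notMem.1 hxy s)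
      · exact h
      · exact absurd (⟨(min_le_left y z).trans_lt h, hs2.trans_le (le_max_right y z)⟩ :
          s ∈ Set.Ioo (min y z) (max y z)) (Set.eq_empty_iff_forall_notMem.1 hyz s)
    by_contra hne
    obtain ⟨t, ht⟩ := Set.nonempty_iff_ne_empty.2 hne
    have hty := hy t ht
    have hsing : Set.Ioo x z = {y} :=
      Set.eq_singleton_iff_unique_mem.2 ⟨hty ▸ ht, hy⟩
    exact hdense y (hsing ▸ isOpen_Ioo)
  have htrans : ∀ {x y z}, r x y → r y z → r x z := by
    intro x y z h1 h2
    rcases le_total x z with h | h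
    · exact (keyle x z h).2 (htrans_aux x y z h h1 h2)
    · exact hsymm ((keyle z x h).2 (htrans_aux z y x h (hsymm h2) (hsymm h1)))
  have pair : ∀ u v w : K, r u w → u < v → v < w → False := by
    intro u v w huw h1 h2
    rw [keyle u w (h1.trans h2).le] at huw
    exact (huw ▸ Set.notMem_empty v) ⟨h1, h2⟩
  refine ⟨⟨hrefl, hsymm, htrans⟩, ?_, ?_, ?_⟩
  · -- classes are closed
    intro x
    rw [← isOpen_compl_iff, isOpen_iff_mem_nhds]
    intro y hy
    simp only [Set.mem_compl_iff, Set.mem_setOf_eq] at hy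
    rw [key] at hy
    obtain ⟨t, ht1, ht2⟩ := Set.nonempty_iff_ne_empty.2 hy
    rcases le_total x y with hxy | hxy
    · rw [min_eq_left hxy] at ht1
      rw [max_eq_right hxy] at ht2
      refine Filter.mem_of_superset (Ioi_mem_nhds ht2) ?_
      intro y' hy'
      simp only [Set.mem_compl_iff, Set.mem_setOf_eq]
      rw [key, min_eq_left (ht1.trans hy').le, max_eq_right (ht1.trans hy').le]
      exact fun h => (h ▸ Set.notMem_empty t) ⟨ht1, hy'⟩
    · rw [min_eq_right hxy] at ht1
      rw [max_eq_left hxy] at ht2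
      refine Filter.mem_of_superset (Iio_mem_nhds ht1) ?_
      intro y' hy'
      simp only [Set.mem_compl_iff, Set.mem_setOf_eq]
      rw [key, min_eq_right (hy'.trans ht2).le, max_eq_left (hy'.trans ht2).le]
      exact fun h => (h ▸ Set.notMem_empty t) ⟨hy', ht2⟩
  · -- classes are convex
    intro x a b c hxa hxc hab hbc
    rcases le_total b x with h | h
    · have hax : a ≤ x := hab.trans h
      have hempty : Set.Ioo a x = ∅ := (keyle a x hax).1 (hsymm hxa)
      have h2 : Set.Ioo b x = ∅ :=
        Set.subset_empty_iff.1 (hempty ▸ Set.Ioo_subset_Ioo_left hab)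
      exact hsymm ((keyle b x h).2 h2)
    · have hxc' : x ≤ c := h.trans hbc
      have hempty : Set.Ioo x c = ∅ := (keyle x c hxc').1 hxc
      have h2 : Set.Ioo x b = ∅ :=
        Set.subset_empty_iff.1 (hempty ▸ Set.Ioo_subset_Ioo_right hbc)
      exact (keyle x b h).2 h2
  · -- classes have at most two elements
    intro x a b c ha hb hc
    by_contra hne
    push_neg at hne
    obtain ⟨hab, hac, hbc⟩ := hne
    have rab : r a b := htrans (hsymm ha) hb
    have rac : r a c := htrans (hsymm ha) hc
    have rbc : r b c := htrans (hsymm hb) hc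
    rcases hab.lt_or_gt with h1 | h1 <;> rcases hac.lt_or_gt with h2 | h2 <;>
      rcases hbc.lt_or_gt with h3 | h3
    · exact pair a b c rac h1 h3
    · exact pair a c b rab h2 h3
    · exact lt_asymm h2 (h1.trans h3)
    · exact pair c a b (hsymm rbc) h2 h1
    · exact pair b a c rbc h1 h2
    · exact lt_asymm h1 (h2.trans h3)
    · exact pair b c a (hsymm rab) h3 h2
    · exact pair c b a (hsymm rac) h3 h1
end

section
/- Let K be a compact linearly ordered space and let K/∼ be its quotient by the relation x ∼ y iff [min(x,y), max(x,y)] is scattered, ordered by [x] ≤ [y] iff x ≤ y. Then K/∼ is a connected linearly ordered space: for any equivalence classes [x] < [y] there is a class strictly between them, and consequently the quotient, being a complete dense linear order with endpoints, is connected in its order topology. -/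
section Aux

variable {K : Type*} [TopologicalSpace K]

lemma IsScatteredSet.mono {S S' : Set K} (hS' : IsScatteredSet S') (h : S ⊆ S') :
    IsScatteredSet S := fun T hT hne => hS' T (hT.trans h) hne

lemma isScatteredSet_of_subsingleton {S : Set K} (h : S.Subsingleton) : IsScatteredSet S := by
  rintro T hT ⟨t, ht⟩
  refine ⟨t, ht, Set.univ, isOpen_univ, ?_⟩
  ext s
  simp only [Set.mem_inter_iff, Set.mem_univ, true_and, Set.mem_singleton_iff]
  exact ⟨fun hs => h (hT hs) (hT ht), fun hs => hs ▸ ht⟩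

/-- A relatively open subset of a crowded set is crowded. -/
lemma crowded_inter_open {T V : Set K} (hV : IsOpen V)
    (hT : ∀ t ∈ T, ∀ U : Set K, IsOpen U → U ∩ T ≠ {t}) :
    ∀ t ∈ T ∩ V, ∀ U : Set K, IsOpen U → U ∩ (T ∩ V) ≠ {t} := by
  intro t ht U hU heq
  refine hT t ht.1 (U ∩ V) (hU.inter hV) ?_
  rw [Set.inter_assoc, Set.inter_comm V T]
  exact heq

lemma IsScatteredSet.union [T1Space K] {S1 S2 : Set K} (h1 : IsScatteredSet S1)
    (h2 : IsScatteredSet S2) : IsScatteredSet (S1 ∪ S2) := by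
  intro T hT hne
  by_contra hiso
  push_neg at hiso
  -- hiso : T is crowded
  set C := closure (T ∩ S1) with hC
  by_cases hsub : T ⊆ C
  · -- T ∩ S1 is crowded and nonempty, contradicting scatteredness of S1
    have hne1 : (T ∩ S1).Nonempty := by
      obtain ⟨t, ht⟩ := hne
      rcases (T ∩ S1).eq_empty_or_nonempty with he | h
      · exfalso
        have := hsub ht
        rw [hC, he, closure_empty] at this
        exact this
      · exact h
    obtain ⟨t, ht, U, hU, hUt⟩ := h1 (T ∩ S1) Set.inter_subset_right hne1
    have htU : t ∈ U ∩ (T ∩ S1) := hUt ▸ rfl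
    have hne2 : U ∩ T ≠ {t} := hiso t ht.1 U hU
    have hss : {t} ⊂ U ∩ T := by
      refine ⟨Set.singleton_subset_iff.2 ⟨htU.1, ht.1⟩, fun hcon => hne2 ?_⟩
      exact Set.Subset.antisymm hcon (Set.singleton_subset_iff.2 ⟨htU.1, ht.1⟩)
    obtain ⟨t', ht', htne⟩ := Set.exists_of_ssubset hss
    have ht'C : t' ∈ C := hsub ht'.2
    have hU' : IsOpen (U ∩ {t}ᶜ) := hU.inter isOpen_compl_singleton
    have ht'U' : t' ∈ U ∩ {t}ᶜ := ⟨ht'.1, htne⟩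
    obtain ⟨s, hsU', hsTS1⟩ := mem_closure_iff.1 ht'C (U ∩ {t}ᶜ) hU' ht'U'
    have : s ∈ U ∩ (T ∩ S1) := ⟨hsU'.1, hsTS1⟩
    rw [hUt] at this
    exact hsU'.2 this
  · -- T \ C is crowded, nonempty, and contained in S2
    rw [Set.not_subset] at hsub
    obtain ⟨t, htT, htC⟩ := hsub
    have hCc : IsOpen (Cᶜ) := isClosed_closure.isOpen_compl
    have hcrowd := crowded_inter_open hCc hiso
    have hsub2 : T ∩ Cᶜ ⊆ S2 := by
      rintro s ⟨hsT, hsC⟩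
      rcases hT hsT with h | h
      · exact absurd (subset_closure (Set.mem_inter hsT h)) hsC
      · exact h
    obtain ⟨s, hs, U, hU, hUs⟩ := h2 (T ∩ Cᶜ) hsub2 ⟨t, htT, htC⟩
    exact hcrowd s hs U hU hUs

/-- A two-point gap interval is scattered. -/
lemma isScatteredSet_pair [LinearOrder K] [OrderTopology K] {z w : K} (hzw : z < w)
    (hgap : Set.Ioo z w = ∅) : IsScatteredSet (Set.Icc z w) := by
  intro T hT hne
  by_cases hw : w ∈ T
  · refine ⟨w, hw, Set.Ioi z, isOpen_Ioi, ?_⟩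
    ext s
    simp only [Set.mem_inter_iff, Set.mem_Ioi, Set.mem_singleton_iff]
    constructor
    · rintro ⟨hzs, hsT⟩
      rcases lt_or_eq_of_le (hT hsT).2 with h | h
      · exact absurd (show s ∈ Set.Ioo z w from ⟨hzs, h⟩) (hgap ▸ Set.notMem_empty s)
      · exact h
    · rintro rfl; exact ⟨hzw, hw⟩
  · obtain ⟨t, ht⟩ := hne
    have hforall : ∀ s ∈ T, s = z := by
      intro s hs
      rcases lt_or_eq_of_le (hT hs).2 with h | h
      · rcases lt_or_eq_of_le (hT hs).1 with h' | h'
        · exact absurd (show s ∈ Set.Ioo z w from ⟨h', h⟩) (hgap ▸ Set.notMem_empty s)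
        · exact h'.symm
      · exact absurd (h ▸ hs) hw
    have hTz : T = {z} := by
      ext s
      simp only [Set.mem_singleton_iff]
      exact ⟨hforall s, fun hs => hs ▸ (hforall t ht ▸ ht)⟩
    refine ⟨z, ?_, Set.univ, isOpen_univ, by rw [Set.univ_inter, hTz]⟩
    rw [hTz]; rfl

variable [LinearOrder K] [OrderTopology K] [CompactSpace K]

/-- No clopen separation whose pieces are closed under gap-adjacency. -/
lemma no_separation (U V : Set K) (hU : IsOpen U) (hV : IsOpen V)
    (hdisj : U ∩ V = ∅) (hcov : U ∪ V = Set.univ)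
    (hsat : ∀ z w : K, z < w → Set.Ioo z w = ∅ → z ∈ U → w ∈ U)
    (a b : K) (ha : a ∈ U) (hb : b ∈ V) (hab : a < b) : False := by
  have hUc : IsClosed U := by
    have : U = Vᶜ := by
      apply Set.Subset.antisymm
      · intro s hs hs'
        exact (hdisj ▸ Set.notMem_empty s) ⟨hs, hs'⟩
      · intro s hs
        rcases (hcov ▸ Set.mem_univ s : s ∈ U ∪ V) with h | h
        · exact h
        · exact absurd h hs
    rw [this]; exact hV.isClosed_compl
  have hVc : IsClosed V := by
    have : V = Uᶜ := by
      apply Set.Subset.antisymm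
      · intro s hs hs'
        exact (hdisj ▸ Set.notMem_empty s) ⟨hs', hs⟩
      · intro s hs
        rcases (hcov ▸ Set.mem_univ s : s ∈ U ∪ V) with h | h
        · exact absurd h hs
        · exact h
    rw [this]; exact hU.isClosed_compl
  -- z = sup of U ∩ [a, b]
  have hScomp : IsCompact (U ∩ Set.Icc a b) := (hUc.inter isClosed_Icc).isCompact
  obtain ⟨z, hzS, hzLUB⟩ := hScomp.exists_isLUB ⟨a, ha, Set.left_mem_Icc.2 hab.le⟩
  -- w = inf of V ∩ [z, b]
  have hS'comp : IsCompact (V ∩ Set.Icc z b) := (hVc.inter isClosed_Icc).isCompact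
  obtain ⟨w, hwS, hwGLB⟩ := hS'comp.exists_isGLB ⟨b, hb, Set.right_mem_Icc.2 hzS.2.2⟩
  have hzw : z < w := by
    rcases lt_or_eq_of_le hwS.2.1 with h | h
    · exact h
    · exfalso
      subst h
      exact (Set.eq_empty_iff_forall_notMem.1 hdisj z) ⟨hzS.1, hwS.1⟩
  have hgap : Set.Ioo z w = ∅ := by
    rw [Set.eq_empty_iff_forall_notMem]
    rintro t ⟨hzt, htw⟩
    rcases (hcov ▸ Set.mem_univ t : t ∈ U ∪ V) with h | h
    · have : t ∈ U ∩ Set.Icc a b :=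
        ⟨h, le_trans hzS.2.1 hzt.le, le_trans htw.le hwS.2.2⟩
      exact absurd (hzLUB.1 this) (not_le.2 hzt)
    · have : t ∈ V ∩ Set.Icc z b := ⟨h, hzt.le, le_trans htw.le hwS.2.2⟩
      exact absurd (hwGLB.1 this) (not_le.2 htw)
  have : w ∈ U := hsat z w hzw hgap hzS.1
  exact (hdisj ▸ Set.notMem_empty w) ⟨this, hwS.1⟩

end Aux

/-- The quotient of a compact linearly ordered space by the scatteredness relation is
densely ordered (between any two distinct classes lies a third) and connected. -/
theorem connectification_connected
    {K : Type*} [TopologicalSpace K] [LinearOrder K] [OrderTopology K] [CompactSpace K]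
    [Nonempty K]
    (r : K → K → Prop)
    (hr : ∀ x y, r x y ↔ IsScatteredSet (Set.Icc (min x y) (max x y))) :
    (∀ x y : K, x < y → ¬ r x y → ∃ z : K, x < z ∧ z < y ∧ ¬ r x z ∧ ¬ r z y) ∧
    ConnectedSpace (Quot r) := by
  have hrle : ∀ x y : K, x ≤ y → (r x y ↔ IsScatteredSet (Set.Icc x y)) := by
    intro x y hxy
    rw [hr, min_eq_left hxy, max_eq_right hxy]
  constructor
  · -- density
    intro x y hxy hnr
    rw [hrle x y hxy.le] at hnr
    by_contra hcon
    push_neg at hcon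
    -- every point of [x,y] has a scattered side
    have hside : ∀ z ∈ Set.Icc x y,
        IsScatteredSet (Set.Icc x z) ∨ IsScatteredSet (Set.Icc z y) := by
      rintro z ⟨hxz, hzy⟩
      rcases eq_or_lt_of_le hxz with rfl | hxz'
      · left; rw [Set.Icc_self]
        exact isScatteredSet_of_subsingleton (Set.subsingleton_singleton)
      rcases eq_or_lt_of_le hzy with rfl | hzy'
      · right; rw [Set.Icc_self]
        exact isScatteredSet_of_subsingleton (Set.subsingleton_singleton)
      by_cases hsc : IsScatteredSet (Set.Icc x z)
      · exact Or.inl hsc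
      · right
        have := hcon z hxz' hzy' (by rwa [hrle x z hxz'.le])
        rwa [hrle z y hzy'.le] at this
    set A := {z : K | z ∈ Set.Icc x y ∧ IsScatteredSet (Set.Icc x z)} with hA
    set B := {z : K | z ∈ Set.Icc x y ∧ IsScatteredSet (Set.Icc z y)} with hB
    have hxA : x ∈ A := ⟨Set.left_mem_Icc.2 hxy.le, by
      rw [Set.Icc_self]; exact isScatteredSet_of_subsingleton Set.subsingleton_singleton⟩
    have hyB : y ∈ B := ⟨Set.right_mem_Icc.2 hxy.le, by
      rw [Set.Icc_self]; exact isScatteredSet_of_subsingleton Set.subsingleton_singleton⟩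
    -- sup of A
    obtain ⟨c, hcmem, hcLUB'⟩ := (isClosed_closure (s := A)).isCompact.exists_isLUB
      ⟨x, subset_closure hxA⟩
    have hcLUB : IsLUB A c := by
      rw [IsLUB, upperBounds_closure] at hcLUB'
      exact ⟨hcLUB'.1, fun b hb => hcLUB'.2 hb⟩
    -- inf of B
    obtain ⟨d, hdmem, hdGLB'⟩ := (isClosed_closure (s := B)).isCompact.exists_isGLB
      ⟨y, subset_closure hyB⟩
    have hdGLB : IsGLB B d := by
      rw [IsGLB, lowerBounds_closure] at hdGLB'
      exact ⟨hdGLB'.1, fun b hb => hdGLB'.2 hb⟩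
    -- the left part up to c is scattered
    have hxc : IsScatteredSet (Set.Icc x c) := by
      by_contra hns
      have hcover : Set.Icc x c ⊆ Set.Ico x c ∪ {c} := by
        rintro s ⟨hxs, hsc⟩
        rcases lt_or_eq_of_le hsc with h | h
        · exact Or.inl ⟨hxs, h⟩
        · exact Or.inr h
      have hIco : ¬ IsScatteredSet (Set.Ico x c) := by
        intro hsc'
        exact hns ((hsc'.union (isScatteredSet_of_subsingleton
          Set.subsingleton_singleton)).mono hcover)
      apply hIco
      intro T hT hne
      by_contra hiso
      push_neg at hiso
      obtain ⟨t, htT⟩ := hne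
      have htc : t < c := (hT htT).2
      have : ∃ a ∈ A, t < a := by
        by_contra hno
        push_neg at hno
        exact absurd (hcLUB.2 hno) (not_le.2 htc)
      obtain ⟨a, haA, hta⟩ := this
      have hcrowd := crowded_inter_open isOpen_Iio hiso (V := Set.Iio a)
      have hsub : T ∩ Set.Iio a ⊆ Set.Icc x a := fun s hs => ⟨(hT hs.1).1, hs.2.le⟩
      obtain ⟨s, hs, U, hU, hUs⟩ := haA.2 (T ∩ Set.Iio a) hsub ⟨t, htT, hta⟩
      exact hcrowd s hs U hU hUs
    -- the right part from d is scattered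
    have hdy : IsScatteredSet (Set.Icc d y) := by
      by_contra hns
      have hcover : Set.Icc d y ⊆ {d} ∪ Set.Ioc d y := by
        rintro s ⟨hds, hsy⟩
        rcases lt_or_eq_of_le hds with h | h
        · exact Or.inr ⟨h, hsy⟩
        · exact Or.inl h.symm
      have hIoc : ¬ IsScatteredSet (Set.Ioc d y) := by
        intro hsc'
        exact hns (((isScatteredSet_of_subsingleton
          Set.subsingleton_singleton).union hsc').mono hcover)
      apply hIoc
      intro T hT hne
      by_contra hiso
      push_neg at hiso
      obtain ⟨t, htT⟩ := hne
      have htd : d < t := (hT htT).1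
      have : ∃ b ∈ B, b < t := by
        by_contra hno
        push_neg at hno
        exact absurd (hdGLB.2 hno) (not_le.2 htd)
      obtain ⟨b, hbB, hbt⟩ := this
      have hcrowd := crowded_inter_open isOpen_Ioi hiso (V := Set.Ioi b)
      have hsub : T ∩ Set.Ioi b ⊆ Set.Icc b y := fun s hs => ⟨hs.2.le, (hT hs.1).2⟩
      obtain ⟨s, hs, U, hU, hUs⟩ := hbB.2 (T ∩ Set.Ioi b) hsub ⟨t, htT, hbt⟩
      exact hcrowd s hs U hU hUs
    -- combine
    apply hnr
    have hcover : Set.Icc x y ⊆ Set.Icc x c ∪ Set.Icc d y := by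
      intro z hz
      rcases hside z hz with h | h
      · exact Or.inl ⟨hz.1, hcLUB.1 ⟨hz, h⟩⟩
      · exact Or.inr ⟨hdGLB.1 ⟨hz, h⟩, hz.2⟩
    exact (hxc.union hdy).mono hcover
  · -- connectedness
    refine { toPreconnectedSpace := ⟨?_⟩,
             toNonempty := ⟨Quot.mk r (Classical.arbitrary K)⟩ }
    rintro u v hu hv hcov ⟨p, -, hp⟩ ⟨q, -, hq⟩
    by_contra hne
    rw [Set.not_nonempty_iff_eq_empty, Set.univ_inter] at hne
    set U := Quot.mk r ⁻¹' u with hUdef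
    set V := Quot.mk r ⁻¹' v with hVdef
    have hUo : IsOpen U := hu.preimage continuous_quot_mk
    have hVo : IsOpen V := hv.preimage continuous_quot_mk
    have hdisj : U ∩ V = ∅ := by
      rw [Set.eq_empty_iff_forall_notMem]
      rintro s ⟨hsU, hsV⟩
      exact (hne ▸ Set.notMem_empty (Quot.mk r s)) ⟨hsU, hsV⟩
    have hcov' : U ∪ V = Set.univ := by
      rw [Set.eq_univ_iff_forall]
      intro s
      exact hcov (Set.mem_univ (Quot.mk r s))
    have hsat : ∀ (W : Set K), W = Quot.mk r ⁻¹' u ∨ W = Quot.mk r ⁻¹' v →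
        ∀ z w : K, z < w → Set.Ioo z w = ∅ → z ∈ W → w ∈ W := by
      intro W _hW z w hzw hgap hzW
      have hrzw : r z w := by
        rw [hrle z w hzw.le]
        exact isScatteredSet_pair hzw hgap
      have : Quot.mk r z = Quot.mk r w := Quot.sound hrzw
      rcases _hW with rfl | rfl
      · rwa [Set.mem_preimage, ← this]
      · rwa [Set.mem_preimage, ← this]
    obtain ⟨a, ha⟩ := Quot.exists_rep p
    obtain ⟨b, hb⟩ := Quot.exists_rep q
    have haU : a ∈ U := by rw [hUdef, Set.mem_preimage, ha]; exact hp
    have hbV : b ∈ V := by rw [hVdef, Set.mem_preimage, hb]; exact hq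
    rcases lt_trichotomy a b with h | h | h
    · exact no_separation U V hUo hVo hdisj hcov'
        (hsat U (Or.inl rfl)) a b haU hbV h
    · exact (hdisj ▸ Set.notMem_empty a) ⟨haU, h ▸ hbV⟩
    · exact no_separation V U hVo hUo (by rw [Set.inter_comm]; exact hdisj)
        (by rw [Set.union_comm]; exact hcov') (hsat V (Or.inr rfl)) b a hbV haU h
end

section
/- Let K be a compact linearly ordered space, X ⊆ K a closed subset. Then there exists a regular extension operator T : C(X) → C(K), i.e. a bounded linear operator with T1 = 1, Tf ≥ 0 whenever f ≥ 0, and (Tf)|_X = f for all f ∈ C(X); moreover ‖T‖ = 1. -/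
/-!
A point `k ∉ X` lies in a gap of `X`, between a point `p ∈ X` and the next point `q ∈ X` (beyond
an end of `X`, take `p = q` = that end). Put `Tf(k) = (1 - w(k)) f(p) + w(k) f(q)`, where `w` is a
Urysohn function vanishing at `p` and equal to `1` at `q`. Then `Tf` is linear in `f` and pointwise
a convex combination of values of `f`, hence positive, `T1 = 1` and `‖Tf‖ ≤ ‖f‖`. On a gap, `Tf`
is the continuous interpolation across it. At a point of `X`, from a side where `X` accumulates
the bracketing points `p`, `q` are squeezed towards it, and from a side where it has an immediate
neighbour in `X`, `Tf` is again the interpolation across that gap.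
-/

open Set Filter Topology

namespace OrderExtension

variable {K : Type*} [LinearOrder K]

section Bracket

variable (X : Set K) [Nonempty X]

/- The greatest point of `X` at or below `k` and the least one at or above `k`; when one of them
does not exist, both are the point of `X` nearest to `k`. -/
open Classical in
noncomputable def lowerPt (k : K) : X :=
  if ∃ x : X, (x : K) ≤ k then Classical.epsilon (IsGreatest {x : X | (x : K) ≤ k})
  else Classical.epsilon (IsLeast {x : X | k ≤ (x : K)})

open Classical in
noncomputable def upperPt (k : K) : X :=
  if ∃ x : X, k ≤ (x : K) then Classical.epsilon (IsLeast {x : X | k ≤ (x : K)})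
  else Classical.epsilon (IsGreatest {x : X | (x : K) ≤ k})

variable {X} {k : K}

lemma lowerPt_eq {p : X} (hp : IsGreatest {x : X | (x : K) ≤ k} p) : lowerPt X k = p := by
  rw [lowerPt, if_pos ⟨p, hp.1⟩]
  exact (Classical.epsilon_spec ⟨p, hp⟩).unique hp

lemma upperPt_eq {q : X} (hq : IsLeast {x : X | k ≤ (x : K)} q) : upperPt X k = q := by
  rw [upperPt, if_pos ⟨q, hq.1⟩]
  exact (Classical.epsilon_spec ⟨q, hq⟩).unique hq

lemma lowerPt_eq_of_forall_lt {q : X} (hk : ∀ x : X, k < x)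
    (hq : IsLeast {x : X | k ≤ (x : K)} q) : lowerPt X k = q := by
  rw [lowerPt, if_neg (by simpa using hk)]
  exact (Classical.epsilon_spec ⟨q, hq⟩).unique hq

lemma upperPt_eq_of_forall_gt {p : X} (hk : ∀ x : X, (x : K) < k)
    (hp : IsGreatest {x : X | (x : K) ≤ k} p) : upperPt X k = p := by
  rw [upperPt, if_neg (by simpa using hk)]
  exact (Classical.epsilon_spec ⟨p, hp⟩).unique hp

lemma lowerPt_of_mem (hk : k ∈ X) : lowerPt X k = ⟨k, hk⟩ :=
  lowerPt_eq ⟨le_refl k, fun _ hx => hx⟩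

lemma upperPt_of_mem (hk : k ∈ X) : upperPt X k = ⟨k, hk⟩ :=
  upperPt_eq ⟨le_refl k, fun _ hx => hx⟩

variable [TopologicalSpace K] [OrderClosedTopology K] [CompactSpace X]

lemma isGreatest_lowerPt (h : ∃ x : X, (x : K) ≤ k) :
    IsGreatest {x : X | (x : K) ≤ k} (lowerPt X k) := by
  obtain ⟨p, hp⟩ :=
    (isClosed_le continuous_subtype_val continuous_const).isCompact.exists_isGreatest h
  rwa [lowerPt_eq hp]

lemma isLeast_upperPt (h : ∃ x : X, k ≤ (x : K)) :
    IsLeast {x : X | k ≤ (x : K)} (upperPt X k) := by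
  obtain ⟨q, hq⟩ :=
    (isClosed_le continuous_const continuous_subtype_val).isCompact.exists_isLeast h
  rwa [upperPt_eq hq]

lemma lowerPt_mem_Icc {x y : X} (hxk : (x : K) ≤ k) (hky : k ≤ (y : K)) :
    lowerPt X k ∈ Icc x y :=
  have hp := isGreatest_lowerPt ⟨x, hxk⟩
  ⟨hp.2 hxk, Subtype.coe_le_coe.1 (hp.1.trans hky)⟩

lemma upperPt_mem_Icc {x y : X} (hxk : (x : K) ≤ k) (hky : k ≤ (y : K)) :
    upperPt X k ∈ Icc x y :=
  have hq := isLeast_upperPt ⟨y, hky⟩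
  ⟨Subtype.coe_le_coe.1 (hxk.trans hq.1), hq.2 hky⟩

end Bracket

section Interpolation

variable [TopologicalSpace K] [T4Space K]

noncomputable def gapWeight (p q : K) : C(K, ℝ) :=
  if h : p < q then
    (exists_continuous_zero_one_of_isClosed isClosed_singleton isClosed_singleton
      (disjoint_singleton.2 h.ne)).choose
  else 0

lemma gapWeight_mem_Icc (p q k : K) : gapWeight p q k ∈ Icc (0 : ℝ) 1 := by
  rw [gapWeight]
  split_ifs with h
  · exact (exists_continuous_zero_one_of_isClosed isClosed_singleton isClosed_singleton
      (disjoint_singleton.2 h.ne)).choose_spec.2.2 k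
  · exact ⟨le_rfl, zero_le_one⟩

lemma gapWeight_left_right {p q : K} (h : p < q) : gapWeight p q p = 0 ∧ gapWeight p q q = 1 := by
  rw [gapWeight, dif_pos h]
  obtain ⟨h0, h1, -⟩ := (exists_continuous_zero_one_of_isClosed isClosed_singleton
    isClosed_singleton (disjoint_singleton.2 h.ne)).choose_spec
  exact ⟨h0 rfl, h1 rfl⟩

variable {X : Set K}

noncomputable def interp (f : C(X, ℝ)) (p q : X) : C(K, ℝ) :=
  f p • (1 - gapWeight (p : K) q) + f q • gapWeight (p : K) q

variable (f : C(X, ℝ))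

lemma interp_apply (p q : X) (k : K) :
    interp f p q k = (1 - gapWeight (p : K) q k) * f p + gapWeight (p : K) q k * f q := by
  simp only [interp, ContinuousMap.add_apply, ContinuousMap.smul_apply, ContinuousMap.sub_apply,
    ContinuousMap.one_apply, smul_eq_mul]
  ring

lemma interp_self (p : X) (k : K) : interp f p p k = f p := by
  rw [interp_apply]; ring

lemma interp_left {p q : X} (h : p < q) : interp f p q p = f p := by
  rw [interp_apply, (gapWeight_left_right (Subtype.coe_lt_coe.2 h)).1]; ring

lemma interp_right {p q : X} (h : p < q) : interp f p q q = f q := by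
  rw [interp_apply, (gapWeight_left_right (Subtype.coe_lt_coe.2 h)).2]; ring

lemma interp_mem_segment (p q : X) (k : K) : interp f p q k ∈ segment ℝ (f p) (f q) := by
  have hw := gapWeight_mem_Icc (p : K) q k
  exact ⟨_, _, sub_nonneg.2 hw.2, hw.1, sub_add_cancel 1 _, (interp_apply f p q k).symm⟩

end Interpolation

section Extension

variable [TopologicalSpace K] [OrderTopology K] {X : Set K} [Nonempty X] (f : C(X, ℝ))

noncomputable def extendFun (k : K) : ℝ :=
  interp f (lowerPt X k) (upperPt X k) k

lemma extendFun_of_mem {k : K} (hk : k ∈ X) : extendFun f k = f ⟨k, hk⟩ := by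
  rw [extendFun, lowerPt_of_mem hk, upperPt_of_mem hk, interp_self]

lemma extendFun_mem_of_convex {S : Set ℝ} (hS : Convex ℝ S) (hf : ∀ x, f x ∈ S) (k : K) :
    extendFun f k ∈ S :=
  hS.segment_subset (hf _) (hf _) (interp_mem_segment f _ _ k)

lemma extendFun_add (g : C(X, ℝ)) (k : K) :
    extendFun (f + g) k = extendFun f k + extendFun g k := by
  simp only [extendFun, interp_apply, ContinuousMap.add_apply]
  ring

lemma extendFun_smul (c : ℝ) (k : K) : extendFun (c • f) k = c * extendFun f k := by
  simp only [extendFun, interp_apply, ContinuousMap.smul_apply, smul_eq_mul]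
  ring

lemma continuousOn_extendFun_Icc_of_gap {p q : X} (hpq : p < q)
    (hgap : ∀ x : X, x ≤ p ∨ q ≤ x) : ContinuousOn (extendFun f) (Icc (p : K) q) := by
  refine (interp f p q).continuous.continuousOn.congr fun k hk => ?_
  rcases hk.1.eq_or_lt with rfl | hpk
  · rw [extendFun_of_mem f p.2, interp_left f hpq]
  rcases hk.2.eq_or_lt with rfl | hkq
  · rw [extendFun_of_mem f q.2, interp_right f hpq]
  have hlower : lowerPt X k = p := lowerPt_eq
    ⟨hpk.le, fun x hx => (hgap x).resolve_right fun h => (hkq.trans_le h).not_ge hx⟩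
  have hupper : upperPt X k = q := upperPt_eq
    ⟨hkq.le, fun x hx => (hgap x).resolve_left fun h => (hpk.trans_le hx).not_ge h⟩
  rw [extendFun, hlower, hupper]

lemma continuousOn_extendFun_Iic_of_isBot {m : X} (hm : IsBot m) :
    ContinuousOn (extendFun f) (Iic (m : K)) := by
  refine (continuousOn_const (c := f m)).congr fun k hk => ?_
  have hupper : IsLeast {x : X | k ≤ (x : K)} m := ⟨hk, fun x _ => hm x⟩
  rcases hk.eq_or_lt with rfl | hkm
  · exact extendFun_of_mem f m.2
  rw [extendFun, lowerPt_eq_of_forall_lt (fun x => hkm.trans_le (hm x)) hupper,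
    upperPt_eq hupper, interp_self]

lemma continuousOn_extendFun_Ici_of_isTop {m : X} (hm : IsTop m) :
    ContinuousOn (extendFun f) (Ici (m : K)) := by
  refine (continuousOn_const (c := f m)).congr fun k hk => ?_
  have hlower : IsGreatest {x : X | (x : K) ≤ k} m := ⟨hk, fun x _ => hm x⟩
  rcases hk.eq_or_lt with rfl | hmk
  · exact extendFun_of_mem f m.2
  rw [extendFun,
    upperPt_eq_of_forall_gt (fun x => (Subtype.coe_le_coe.2 (hm x)).trans_lt hmk) hlower,
    lowerPt_eq hlower, interp_self]

variable [CompactSpace X]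

lemma norm_extendFun_le (k : K) : ‖extendFun f k‖ ≤ ‖f‖ :=
  mem_closedBall_zero_iff.1 <| extendFun_mem_of_convex f (convex_closedBall 0 ‖f‖)
    (fun x => mem_closedBall_zero_iff.2 (f.norm_coe_le_norm x)) k

lemma extendFun_mem_of_mem_Icc {S : Set ℝ} (hS : Convex ℝ S) {x y : X}
    (hf : ∀ z ∈ Icc x y, f z ∈ S) {k : K} (hk : k ∈ Icc (x : K) y) : extendFun f k ∈ S :=
  hS.segment_subset (hf _ (lowerPt_mem_Icc hk.1 hk.2)) (hf _ (upperPt_mem_Icc hk.1 hk.2))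
    (interp_mem_segment f _ _ k)

lemma continuousAt_extendFun_of_notMem {k : K} (hk : k ∉ X) :
    ContinuousAt (extendFun f) k := by
  by_cases hbelow : ∃ x : X, (x : K) ≤ k
  · have hp := isGreatest_lowerPt hbelow
    have hpk : (lowerPt X k : K) < k := hp.1.lt_of_ne fun h => hk (h ▸ (lowerPt X k).2)
    by_cases habove : ∃ x : X, k ≤ (x : K)
    · have hq := isLeast_upperPt habove
      have hkq : k < upperPt X k := hq.1.lt_of_ne' fun h => hk (h ▸ (upperPt X k).2)
      have hgap : ∀ x : X, x ≤ lowerPt X k ∨ upperPt X k ≤ x := fun x =>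
        (le_total (x : K) k).imp (fun h => hp.2 h) (fun h => hq.2 h)
      exact (continuousOn_extendFun_Icc_of_gap f (hpk.trans hkq) hgap).continuousAt
        (Icc_mem_nhds hpk hkq)
    · push Not at habove
      exact (continuousOn_extendFun_Ici_of_isTop f fun x => hp.2 (habove x).le).continuousAt
        (Ici_mem_nhds hpk)
  · push Not at hbelow
    have hq := isLeast_upperPt ⟨Classical.arbitrary X, (hbelow _).le⟩
    exact (continuousOn_extendFun_Iic_of_isBot f fun x => hq.2 (hbelow x).le).continuousAt
      (Iic_mem_nhds (hbelow _))

lemma continuousWithinAt_extendFun_of_bracket {k : K} (hk : k ∈ X) {s : Set K}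
    (h : ∀ u ∈ 𝓝 k, ∃ x y : X, Icc (x : K) y ∈ 𝓝[s] k ∧ Icc (x : K) y ⊆ u) :
    ContinuousWithinAt (extendFun f) s k := by
  rw [ContinuousWithinAt, extendFun_of_mem f hk, Metric.nhds_basis_closedBall.tendsto_right_iff]
  intro ε hε
  obtain ⟨u, hu, hfu⟩ := (mem_nhds_subtype X ⟨k, hk⟩ _).1
    (f.continuous.continuousAt.preimage_mem_nhds (Metric.closedBall_mem_nhds _ hε))
  obtain ⟨x, y, hxy, hsub⟩ := h u hu
  filter_upwards [hxy] with k' hk'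
  exact extendFun_mem_of_mem_Icc f (convex_closedBall _ _) (fun z hz => hfu (hsub hz)) hk'

lemma continuousWithinAt_extendFun_Ici_of_mem {k : K} (hk : k ∈ X) :
    ContinuousWithinAt (extendFun f) (Ici k) k := by
  by_cases htop : ∀ x : X, (x : K) ≤ k
  · exact (continuousOn_extendFun_Ici_of_isTop f (m := ⟨k, hk⟩) htop).continuousWithinAt
      self_mem_Ici
  push Not at htop
  obtain ⟨x₁, hx₁⟩ := htop
  by_cases hacc : ∀ b, k < b → ∃ x : X, k < x ∧ (x : K) < b
  · refine continuousWithinAt_extendFun_of_bracket f hk fun u hu => ?_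
    obtain ⟨b, hkb, hmem, hsub⟩ :=
      exists_Icc_mem_subset_of_mem_nhdsGE (mem_nhdsWithin_of_mem_nhds hu)
    rcases hkb.eq_or_lt with rfl | hkb
    · exact ⟨⟨_, hk⟩, ⟨_, hk⟩, hmem, hsub⟩
    obtain ⟨x, hkx, hxb⟩ := hacc b hkb
    exact ⟨⟨k, hk⟩, x, Icc_mem_nhdsGE hkx, (Icc_subset_Icc_right hxb.le).trans hsub⟩
  push Not at hacc
  obtain ⟨c, hkc, hgap⟩ := hacc
  have hq := isLeast_upperPt (k := c) ⟨x₁, hgap x₁ hx₁⟩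
  have hkq : k < upperPt X c := hkc.trans_le hq.1
  refine ((continuousOn_extendFun_Icc_of_gap f (p := ⟨k, hk⟩) hkq fun x => ?_).continuousWithinAt
    ⟨le_rfl, hkq.le⟩).mono_of_mem_nhdsWithin (Icc_mem_nhdsGE hkq)
  exact (le_or_gt (x : K) k).imp id fun h => hq.2 (hgap x h)

lemma continuousWithinAt_extendFun_Iic_of_mem {k : K} (hk : k ∈ X) :
    ContinuousWithinAt (extendFun f) (Iic k) k := by
  by_cases hbot : ∀ x : X, k ≤ (x : K)
  · exact (continuousOn_extendFun_Iic_of_isBot f (m := ⟨k, hk⟩) hbot).continuousWithinAt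
      self_mem_Iic
  push Not at hbot
  obtain ⟨x₁, hx₁⟩ := hbot
  by_cases hacc : ∀ b, b < k → ∃ x : X, (x : K) < k ∧ b < x
  · refine continuousWithinAt_extendFun_of_bracket f hk fun u hu => ?_
    obtain ⟨b, hbk, hmem, hsub⟩ :=
      exists_Icc_mem_subset_of_mem_nhdsLE (mem_nhdsWithin_of_mem_nhds hu)
    rcases hbk.eq_or_lt with rfl | hbk
    · exact ⟨⟨_, hk⟩, ⟨_, hk⟩, hmem, hsub⟩
    obtain ⟨x, hxk, hbx⟩ := hacc b hbk
    exact ⟨x, ⟨k, hk⟩, Icc_mem_nhdsLE hxk, (Icc_subset_Icc_left hbx.le).trans hsub⟩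
  push Not at hacc
  obtain ⟨c, hck, hgap⟩ := hacc
  have hp := isGreatest_lowerPt (k := c) ⟨x₁, hgap x₁ hx₁⟩
  have hpk : (lowerPt X c : K) < k := hp.1.trans_lt hck
  refine ((continuousOn_extendFun_Icc_of_gap f (q := ⟨k, hk⟩) hpk fun x => ?_).continuousWithinAt
    ⟨hpk.le, le_rfl⟩).mono_of_mem_nhdsWithin (Icc_mem_nhdsLE hpk)
  exact (lt_or_ge (x : K) k).imp (fun h => hp.2 (hgap x h)) id

lemma continuous_extendFun : Continuous (extendFun f) := by
  refine continuous_iff_continuousAt.2 fun k => ?_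
  by_cases hk : k ∈ X
  · exact continuousAt_iff_continuous_left_right.2
      ⟨continuousWithinAt_extendFun_Iic_of_mem f hk, continuousWithinAt_extendFun_Ici_of_mem f hk⟩
  · exact continuousAt_extendFun_of_notMem f hk

end Extension

section Operator

variable [TopologicalSpace K] [OrderTopology K] [CompactSpace K] (X : Set K) [Nonempty X]
  [CompactSpace X]

noncomputable def extendCLM : C(X, ℝ) →L[ℝ] C(K, ℝ) :=
  LinearMap.mkContinuous
    { toFun := fun f => ⟨extendFun f, continuous_extendFun f⟩
      map_add' := fun f g => ContinuousMap.ext (extendFun_add f g)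
      map_smul' := fun c f => ContinuousMap.ext (extendFun_smul f c) }
    1 fun f => by
      rw [one_mul]
      exact (ContinuousMap.norm_le _ (norm_nonneg f)).2 (norm_extendFun_le f)

lemma extendCLM_apply (f : C(X, ℝ)) (k : K) : extendCLM X f k = extendFun f k := rfl

lemma extendCLM_one : extendCLM X 1 = 1 := by
  ext k
  rw [extendCLM_apply, ContinuousMap.one_apply]
  exact extendFun_mem_of_convex 1 (convex_singleton 1) (fun _ => rfl) k

lemma extendCLM_nonneg {f : C(X, ℝ)} (hf : 0 ≤ f) : 0 ≤ extendCLM X f :=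
  fun k => extendFun_mem_of_convex f (convex_Ici 0) hf k

lemma norm_extendCLM : ‖extendCLM X‖ = 1 := by
  have : Nonempty K := ⟨Classical.arbitrary X⟩
  refine le_antisymm (LinearMap.mkContinuous_norm_le _ zero_le_one _) ?_
  simpa [extendCLM_one] using (extendCLM X).le_opNorm 1

end Operator

end OrderExtension

theorem exists_regular_extension_operator_general
    {K : Type*} [TopologicalSpace K] [LinearOrder K] [OrderTopology K] [CompactSpace K]
    (X : Set K) (hXne : X.Nonempty) [CompactSpace X] :
    ∃ T : C(X, ℝ) →L[ℝ] C(K, ℝ), ‖T‖ = 1 ∧ T 1 = 1 ∧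
      (∀ f : C(X, ℝ), 0 ≤ f → 0 ≤ T f) ∧
      (∀ (f : C(X, ℝ)) (x : K) (hx : x ∈ X), (T f) x = f ⟨x, hx⟩) := by
  have := hXne.to_subtype
  exact ⟨OrderExtension.extendCLM X, OrderExtension.norm_extendCLM X,
    OrderExtension.extendCLM_one X, fun _ => OrderExtension.extendCLM_nonneg X,
    fun f _ hx => OrderExtension.extendFun_of_mem f hx⟩

/-- For a closed subset X of a compact linearly ordered space K there exists a regular
extension operator T : C(X) → C(K): positive, linear, T1 = 1, Tf extends f, ‖T‖ = 1. -/
theorem exists_regular_extension_operator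
    {K : Type*} [TopologicalSpace K] [LinearOrder K] [OrderTopology K] [CompactSpace K]
    (X : Set K) (hXne : X.Nonempty) (hXcl : IsClosed X) [CompactSpace X] :
    ∃ T : C(X, ℝ) →L[ℝ] C(K, ℝ), ‖T‖ = 1 ∧ T 1 = 1 ∧
      (∀ f : C(X, ℝ), 0 ≤ f → 0 ≤ T f) ∧
      (∀ (f : C(X, ℝ)) (x : K) (hx : x ∈ X), (T f) x = f ⟨x, hx⟩) :=
  exists_regular_extension_operator_general X hXne
end

section
/- Let f : Y → Z be an increasing continuous surjection from a compact linearly ordered space Y onto a separable (second countable) linearly ordered compact space Z, such that every fiber f⁻¹(z) has at most two elements. Then Y is separable. -/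
open Set


/-- If Y is a compact linearly ordered space admitting an increasing continuous at-most-
two-to-one surjection onto a second countable linearly ordered compact space Z, then Y is
separable. -/
theorem separable_of_two_to_one_onto_second_countable
    {Y Z : Type*} [TopologicalSpace Y] [LinearOrder Y] [OrderTopology Y] [CompactSpace Y]
    [TopologicalSpace Z] [LinearOrder Z] [OrderTopology Z] [CompactSpace Z]
    [SecondCountableTopology Z]
    (f : Y → Z) (hmono : Monotone f) (hcont : Continuous f) (hsurj : Function.Surjective f)
    (hfib : ∀ z : Z, (f ⁻¹' {z}).encard ≤ 2) :
    TopologicalSpace.SeparableSpace Y := by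
  rcases isEmpty_or_nonempty Y with hY | hY
  · exact ⟨∅, countable_empty, by
      rw [dense_iff_inter_open]
      rintro U _ ⟨x, _⟩
      exact (IsEmpty.false x).elim⟩
  -- greatest and least elements of Y
  obtain ⟨gY, -, hgY⟩ := isCompact_univ.exists_isGreatest (univ_nonempty (α := Y))
  obtain ⟨lY, -, hlY⟩ := isCompact_univ.exists_isLeast (univ_nonempty (α := Y))
  simp only [mem_upperBounds, mem_lowerBounds, mem_univ, forall_true_left] at hgY hlY
  -- dense countable set in Z
  obtain ⟨D, hDc, hDd⟩ := TopologicalSpace.exists_countable_dense Z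
  -- jump points of Z
  set J : Set Z := {z | ∃ z', z ⋖ z'} ∪ {z | ∃ z', z' ⋖ z} with hJ
  have hJc : J.Countable := countable_setOf_covBy_right.union countable_setOf_covBy_left
  set S : Set Z := D ∪ J with hS
  have hSc : S.Countable := hDc.union hJc
  set T : Set Y := (f ⁻¹' S) ∪ {gY, lY} with hT
  have hfibfin : ∀ z : Z, (f ⁻¹' {z}).Finite := fun z =>
    Set.finite_of_encard_le_coe (k := 2) (by simpa using hfib z)
  have hTc : T.Countable := by
    have : f ⁻¹' S = ⋃ z ∈ S, f ⁻¹' {z} := by ext x; simp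
    refine Countable.union ?_ (by simp)
    rw [this]
    exact hSc.biUnion fun z _ => (hfibfin z).countable
  refine ⟨T, hTc, ?_⟩
  rw [dense_iff_inter_open]
  rintro U hU ⟨y, hyU⟩
  by_cases hmax : ∀ x : Y, x ≤ y
  · refine ⟨y, hyU, ?_⟩
    have : y = gY := le_antisymm (hgY y) (hmax gY)
    simp [hT, this]
  by_cases hmin : ∀ x : Y, y ≤ x
  · refine ⟨y, hyU, ?_⟩
    have : y = lY := le_antisymm (hmin lY) (hlY y)
    simp [hT, this]
  push_neg at hmax hmin
  obtain ⟨u, hu⟩ := hmax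
  obtain ⟨l, hl⟩ := hmin
  obtain ⟨a, b, hyab, hab⟩ := (mem_nhds_iff_exists_Ioo_subset' ⟨l, hl⟩
    ⟨u, hu⟩).mp (hU.mem_nhds hyU)
  rcases eq_or_lt_of_le (hmono (le_of_lt (hyab.1.trans hyab.2))) with heq | hlt
  · -- f a = f b : fiber has 3 elements, contradiction
    exfalso
    have h3 : ({a, y, b} : Set Y) ⊆ f ⁻¹' {f a} := by
      rintro x (rfl | rfl | rfl)
      · rfl
      · exact le_antisymm (heq ▸ hmono hyab.2.le) (hmono hyab.1.le)
      · exact heq.symm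
    have hne1 : a ≠ y := ne_of_lt hyab.1
    have hne2 : y ≠ b := ne_of_lt hyab.2
    have hne3 : a ≠ b := ne_of_lt (hyab.1.trans hyab.2)
    have : ({a, y, b} : Set Y).encard = 3 := by
      rw [Set.encard_insert_of_notMem (by simp [Set.mem_insert_iff, Set.mem_singleton_iff, hne1, hne3]),
        Set.encard_pair hne2]
      rfl
    have hle := (Set.encard_mono h3).trans (hfib (f a))
    rw [this] at hle
    norm_num at hle
  · rcases eq_empty_or_nonempty (Ioo (f a) (f b)) with hemp | ⟨z, hz⟩
    · -- jump in Z: y itself is in T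
      refine ⟨y, hyU, Or.inl ?_⟩
      have hcov : f a ⋖ f b := ⟨hlt, fun c hc hc' => by
        rw [Set.eq_empty_iff_forall_notMem] at hemp
        exact hemp c ⟨hc, hc'⟩⟩
      have h1 : f a ≤ f y := hmono hyab.1.le
      have h2 : f y ≤ f b := hmono hyab.2.le
      rcases eq_or_lt_of_le h1 with heq1 | hlt1
      · exact Or.inr (Or.inl ⟨f b, heq1 ▸ hcov⟩)
      · have hyb : f y = f b := le_antisymm h2 (le_of_not_gt (hcov.2 hlt1))
        exact Or.inr (Or.inr ⟨f a, hyb ▸ hcov⟩)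
    · -- D meets (f a, f b); its preimage lies in (a,b)
      obtain ⟨d, hdD, hd⟩ := hDd.exists_mem_open isOpen_Ioo ⟨z, hz⟩
      obtain ⟨w, rfl⟩ := hsurj d
      have haw : a < w := lt_of_not_ge fun h => absurd (hmono h) (not_le.mpr hd.1)
      have hwb : w < b := lt_of_not_ge fun h => absurd (hmono h) (not_le.mpr hd.2)
      exact ⟨w, hab ⟨haw, hwb⟩, Or.inl (Or.inl hdD)⟩
end

section
/- Let θ : K → L be an increasing surjection of compact linearly ordered spaces such that the set Q = { x ∈ L : x is internal in L and |θ⁻¹(x)| > 1 } is somewhere dense in L (dense in some nonempty open interval). Then there is no bounded linear projection from C(K) onto the subspace { φ ∘ θ : φ ∈ C(L) } of C(K). -/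
open Set

/-- Key lemma: if θ : K → L is an increasing surjection of compact linearly ordered
spaces such that the set of internal points of L with non-degenerate θ-fiber is dense in
some nonempty open interval of L, then there is no bounded linear projection of C(K)
onto the copy of C(L) consisting of functions of the form φ ∘ θ. -/
theorem no_projection_onto_CL
    {K L : Type*} [TopologicalSpace K] [LinearOrder K] [OrderTopology K] [CompactSpace K]
    [TopologicalSpace L] [LinearOrder L] [OrderTopology L] [CompactSpace L]
    (θ : K → L) (hθc : Continuous θ) (hθm : Monotone θ) (hθs : Function.Surjective θ)
    (a b : L) (hne : (Set.Ioo a b).Nonempty)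
    (hdense : Set.Ioo a b ⊆ closure {x : L |
      (∀ u v : L, u < x → x < v → (Set.Icc u x).Infinite ∧ (Set.Icc x v).Infinite) ∧
      ∃ k k' : K, θ k = x ∧ θ k' = x ∧ k ≠ k'}) :
    ¬ ∃ P : C(K, ℝ) →L[ℝ] C(K, ℝ),
      (∀ g : C(K, ℝ), P g ∈ {g : C(K, ℝ) | ∃ φ : C(L, ℝ), ∀ x : K, g x = φ (θ x)}) ∧
      (∀ g ∈ {g : C(K, ℝ) | ∃ φ : C(L, ℝ), ∀ x : K, g x = φ (θ x)}, P g = g) := by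
  classical
  rintro ⟨P, hP1, hP2⟩
  set Θ : C(K, L) := ⟨θ, hθc⟩ with hΘdef
  set Q : Set L := {x : L |
      (∀ u v : L, u < x → x < v → (Set.Icc u x).Infinite ∧ (Set.Icc x v).Infinite) ∧
      ∃ k k' : K, θ k = x ∧ θ k' = x ∧ k ≠ k'} with hQdef
  -- main inductive construction
  have key : ∀ n : ℕ, ∃ (w : ℕ → C(K, ℝ)) (α β : L),
      (Ioo α β).Nonempty ∧ Ioo α β ⊆ Ioo a b ∧
      (∀ t : K, |∑ i ∈ Finset.range n, w i t| ≤ 1) ∧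
      (∀ t : K, θ t ∈ Ioo α β → ∀ i < n, w i t = 0) ∧
      (∀ t : K, θ t ∈ Ioo α β → ∀ i < n, (1:ℝ)/4 ≤ P (w i) t) := by
    intro n
    induction n with
    | zero =>
        exact ⟨fun _ => 0, a, b, hne, Subset.rfl, by simp, fun t ht i hi => by omega,
          fun t ht i hi => by omega⟩
    | succ n ih =>
        obtain ⟨w, α, β, hαβ, hsub, hbnd, hvan, hest⟩ := ih
        -- pick x ∈ Q ∩ Ioo α β
        obtain ⟨p, hp⟩ := hαβ
        obtain ⟨x, hxI, hxQ⟩ := mem_closure_iff.mp (hdense (hsub hp)) (Ioo α β) isOpen_Ioo hp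
        obtain ⟨hint, k, k', hk, hk', hkk⟩ := hxQ
        set k₀ := min k k' with hk₀
        set k₁ := max k k' with hk₁
        have hk01 : k₀ < k₁ := min_lt_max.mpr hkk
        have hθk₀ : θ k₀ = x := by
          rcases le_total k k' with h | h
          · rw [hk₀, min_eq_left h, hk]
          · rw [hk₀, min_eq_right h, hk']
        have hθk₁ : θ k₁ = x := by
          rcases le_total k k' with h | h
          · rw [hk₁, max_eq_right h, hk']
          · rw [hk₁, max_eq_left h, hk]
        -- the splitting function g
        obtain ⟨g, hg0, hg1, hg01⟩ := exists_continuous_zero_one_of_isClosed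
          (isClosed_Iic (a := k₀)) (isClosed_Ici (a := k₁))
          (Iic_disjoint_Ici.mpr (not_le.mpr hk01))
        obtain ⟨ψ, hψ⟩ := hP1 g
        set lam := ψ x with hlam
        -- continuity neighborhood
        have hUmem : (⇑ψ ⁻¹' Ioo (lam - 1/4) (lam + 1/4)) ∩ Ioo α β ∈ nhds x := by
          refine Filter.inter_mem ?_ (isOpen_Ioo.mem_nhds hxI)
          exact (isOpen_Ioo.preimage ψ.continuous).mem_nhds (by simp [hlam])
        obtain ⟨u, v, hxuv, huv⟩ :=
          (mem_nhds_iff_exists_Ioo_subset' ⟨α, hxI.1⟩ ⟨β, hxI.2⟩).mp hUmem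
        have hux : u < x := hxuv.1
        have hxv : x < v := hxuv.2
        -- facts about g's support relative to θ
        have hglow : ∀ t : K, θ t < x → g t = 0 := by
          intro t ht
          have : t ≤ k₀ := by
            by_contra h
            exact absurd (hθk₀ ▸ hθm (le_of_not_ge h)) (not_le.mpr ht)
          exact hg0 this
        have hghigh : ∀ t : K, x < θ t → g t = 1 := by
          intro t ht
          have : k₁ ≤ t := by
            by_contra h
            exact absurd (hθk₁ ▸ hθm (le_of_not_ge h)) (not_le.mpr ht)
          exact hg1 this
        rcases le_or_gt lam (1/2) with hcase | hcase
        · -- "above" case : work on the right of x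
          have hinf : (Ioo x v).Infinite := by
            refine Set.Infinite.mono ?_ (((hint u v hux hxv).2).diff (Set.toFinite {x, v}))
            intro y hy
            rcases hy with ⟨⟨h1, h2⟩, h3⟩
            simp only [mem_insert_iff, mem_singleton_iff, not_or] at h3
            exact ⟨lt_of_le_of_ne h1 (Ne.symm h3.1), lt_of_le_of_ne h2 h3.2⟩
          obtain ⟨q₁, hq₁⟩ := hinf.nonempty
          obtain ⟨q₂, hq₂d⟩ := (hinf.diff (Set.finite_singleton q₁)).nonempty
          rw [Set.mem_diff, Set.mem_singleton_iff] at hq₂d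
          obtain ⟨hq₂, hq₂ne⟩ := hq₂d
          set qa := min q₁ q₂ with hqa
          set qb := max q₁ q₂ with hqb
          have hqab : qa < qb := min_lt_max.mpr (fun h => hq₂ne h.symm)
          have hqaI : qa ∈ Ioo x v := by
            rcases le_total q₁ q₂ with h | h
            · rw [hqa, min_eq_left h]; exact hq₁
            · rw [hqa, min_eq_right h]; exact hq₂
          have hqbI : qb ∈ Ioo x v := by
            rcases le_total q₁ q₂ with h | h
            · rw [hqb, max_eq_right h]; exact hq₂
            · rw [hqb, max_eq_left h]; exact hq₁
          -- cutoff ρ on L : 0 on Iic x, 1 on Ici qa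
          obtain ⟨ρ, hρ0, hρ1, hρ01⟩ := exists_continuous_zero_one_of_isClosed
            (isClosed_Iic (a := x)) (isClosed_Ici (a := qa))
            (Iic_disjoint_Ici.mpr (not_le.mpr hqaI.1))
          set W : C(K, ℝ) := ρ.comp Θ - g with hW
          have hPW : ∀ t : K, P W t = ρ (θ t) - ψ (θ t) := by
            intro t
            have h1 : P (ρ.comp Θ) = ρ.comp Θ := hP2 _ ⟨ρ, fun s => rfl⟩
            rw [hW, map_sub, ContinuousMap.sub_apply, h1, hψ t]
            rfl
          -- support of W
          have hWsupp : ∀ t : K, W t ≠ 0 → θ t ∈ Icc x qa := by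
            intro t hWt
            by_contra h
            rcases not_and_or.mp h with h | h
            · have hlt : θ t < x := not_le.mp h
              have : W t = 0 := by
                simp [hW, hΘdef, ContinuousMap.sub_apply, ContinuousMap.comp_apply,
                  ContinuousMap.coe_mk, hρ0 (le_of_lt hlt : θ t ∈ Iic x), hglow t hlt]
              exact hWt this
            · have hgt : qa < θ t := not_le.mp h
              have : W t = 0 := by
                simp [hW, hΘdef, ContinuousMap.sub_apply, ContinuousMap.comp_apply,
                  ContinuousMap.coe_mk, hρ1 (le_of_lt hgt : θ t ∈ Ici qa),
                  hghigh t (lt_trans hqaI.1 hgt)]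
              exact hWt this
          have hIcc_sub : Icc x qa ⊆ Ioo α β := by
            intro y hy
            have h1 : y < v := lt_of_le_of_lt hy.2 hqaI.2
            have h2 : u < y := lt_of_lt_of_le hux hy.1
            exact (huv ⟨h2, h1⟩).2
          refine ⟨Function.update w n W, qa, v, ⟨qb, hqab, hqbI.2⟩, ?_, ?_, ?_, ?_⟩
          · -- new zone inside Ioo a b
            intro y hy
            exact hsub ((huv ⟨lt_trans hux (lt_trans hqaI.1 hy.1), hy.2⟩).2)
          · -- norm bound
            intro t
            rw [Finset.sum_range_succ, Function.update_self]
            have hold : ∀ i ∈ Finset.range n, Function.update w n W i t = w i t := by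
              intro i hi
              rw [Function.update_of_ne (Nat.ne_of_lt (Finset.mem_range.mp hi))]
            rw [Finset.sum_congr rfl hold]
            by_cases hWt : W t = 0
            · rw [hWt, add_zero]; exact hbnd t
            · have hmem := hWsupp t hWt
              have hzero : ∀ i < n, w i t = 0 := hvan t (hIcc_sub hmem)
              have : ∑ i ∈ Finset.range n, w i t = 0 :=
                Finset.sum_eq_zero fun i hi => hzero i (Finset.mem_range.mp hi)
              rw [this, zero_add]
              have h1 := hρ01 (Θ t)
              have h2 := hg01 t
              simp only [mem_Icc] at h1 h2
              rw [hW]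
              simp only [ContinuousMap.sub_apply, ContinuousMap.comp_apply]
              rw [abs_le]
              exact ⟨by linarith, by linarith⟩
          · -- vanishing on new zone
            intro t ht i hi
            rcases Nat.lt_succ_iff_lt_or_eq.mp hi with hi' | hi'
            · rw [Function.update_of_ne (Nat.ne_of_lt hi')]
              exact hvan t ((huv ⟨lt_trans hux (lt_trans hqaI.1 ht.1), ht.2⟩).2) i hi'
            · subst hi'
              rw [Function.update_self]
              by_contra h
              exact (not_le.mpr ht.1) ((hWsupp t h).2)
          · -- estimate on new zone
            intro t ht i hi
            rcases Nat.lt_succ_iff_lt_or_eq.mp hi with hi' | hi'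
            · rw [Function.update_of_ne (Nat.ne_of_lt hi')]
              exact hest t ((huv ⟨lt_trans hux (lt_trans hqaI.1 ht.1), ht.2⟩).2) i hi'
            · subst hi'
              rw [Function.update_self, hPW t]
              have hρval : ρ (θ t) = 1 := hρ1 (le_of_lt ht.1 : θ t ∈ Ici qa)
              have hψval : ψ (θ t) ∈ Ioo (lam - 1/4) (lam + 1/4) :=
                (huv ⟨lt_trans hux (lt_trans hqaI.1 ht.1), ht.2⟩).1
              simp only [mem_Ioo] at hψval
              rw [hρval]
              linarith [hψval.2]
        · -- "below" case : work on the left of x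
          have hinf : (Ioo u x).Infinite := by
            refine Set.Infinite.mono ?_ (((hint u v hux hxv).1).diff (Set.toFinite {u, x}))
            intro y hy
            rcases hy with ⟨⟨h1, h2⟩, h3⟩
            simp only [mem_insert_iff, mem_singleton_iff, not_or] at h3
            exact ⟨lt_of_le_of_ne h1 (Ne.symm h3.1), lt_of_le_of_ne h2 h3.2⟩
          obtain ⟨q₁, hq₁⟩ := hinf.nonempty
          obtain ⟨q₂, hq₂d⟩ := (hinf.diff (Set.finite_singleton q₁)).nonempty
          rw [Set.mem_diff, Set.mem_singleton_iff] at hq₂d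
          obtain ⟨hq₂, hq₂ne⟩ := hq₂d
          set qa := max q₁ q₂ with hqa
          set qb := min q₁ q₂ with hqb
          have hqab : qb < qa := min_lt_max.mpr (fun h => hq₂ne h.symm)
          have hqaI : qa ∈ Ioo u x := by
            rcases le_total q₁ q₂ with h | h
            · rw [hqa, max_eq_right h]; exact hq₂
            · rw [hqa, max_eq_left h]; exact hq₁
          have hqbI : qb ∈ Ioo u x := by
            rcases le_total q₁ q₂ with h | h
            · rw [hqb, min_eq_left h]; exact hq₁
            · rw [hqb, min_eq_right h]; exact hq₂
          -- cutoff ρ on L : 0 on Ici x, 1 on Iic qa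
          obtain ⟨ρ, hρ0, hρ1, hρ01⟩ := exists_continuous_zero_one_of_isClosed
            (isClosed_Ici (a := x)) (isClosed_Iic (a := qa))
            ((Iic_disjoint_Ici.mpr (not_le.mpr hqaI.2)).symm)
          set W : C(K, ℝ) := ρ.comp Θ + g - 1 with hW
          have hPW : ∀ t : K, P W t = ρ (θ t) + ψ (θ t) - 1 := by
            intro t
            have h1 : P (ρ.comp Θ) = ρ.comp Θ := hP2 _ ⟨ρ, fun s => rfl⟩
            have h2 : P (1 : C(K, ℝ)) = 1 := hP2 _ ⟨1, fun s => rfl⟩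
            rw [hW, map_sub, map_add, ContinuousMap.sub_apply, ContinuousMap.add_apply,
              h1, h2, hψ t]
            rfl
          have hWsupp : ∀ t : K, W t ≠ 0 → θ t ∈ Icc qa x := by
            intro t hWt
            by_contra h
            rcases not_and_or.mp h with h | h
            · have hlt : θ t < qa := not_le.mp h
              have : W t = 0 := by
                have hρv : ρ (θ t) = 1 := hρ1 (le_of_lt hlt : θ t ∈ Iic qa)
                have hgv : g t = 0 := hglow t (lt_trans hlt hqaI.2)
                simp [hW, hΘdef, ContinuousMap.sub_apply, ContinuousMap.add_apply,
                  ContinuousMap.comp_apply, ContinuousMap.coe_mk, hρv, hgv]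
              exact hWt this
            · have hgt : x < θ t := not_le.mp h
              have : W t = 0 := by
                have hρv : ρ (θ t) = 0 := hρ0 (le_of_lt hgt : θ t ∈ Ici x)
                have hgv : g t = 1 := hghigh t hgt
                simp [hW, hΘdef, ContinuousMap.sub_apply, ContinuousMap.add_apply,
                  ContinuousMap.comp_apply, ContinuousMap.coe_mk, hρv, hgv]
              exact hWt this
          have hIcc_sub : Icc qa x ⊆ Ioo α β := by
            intro y hy
            have h1 : u < y := lt_of_lt_of_le hqaI.1 hy.1
            have h2 : y < v := lt_of_le_of_lt hy.2 hxv
            exact (huv ⟨h1, h2⟩).2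
          refine ⟨Function.update w n W, u, qa, ⟨qb, hqbI.1, hqab⟩, ?_, ?_, ?_, ?_⟩
          · intro y hy
            exact hsub ((huv ⟨hy.1, lt_trans hy.2 (lt_trans hqaI.2 hxv)⟩).2)
          · intro t
            rw [Finset.sum_range_succ, Function.update_self]
            have hold : ∀ i ∈ Finset.range n, Function.update w n W i t = w i t := by
              intro i hi
              rw [Function.update_of_ne (Nat.ne_of_lt (Finset.mem_range.mp hi))]
            rw [Finset.sum_congr rfl hold]
            by_cases hWt : W t = 0
            · rw [hWt, add_zero]; exact hbnd t
            · have hmem := hWsupp t hWt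
              have hzero : ∀ i < n, w i t = 0 := hvan t (hIcc_sub hmem)
              have : ∑ i ∈ Finset.range n, w i t = 0 :=
                Finset.sum_eq_zero fun i hi => hzero i (Finset.mem_range.mp hi)
              rw [this, zero_add]
              have h1 := hρ01 (Θ t)
              have h2 := hg01 t
              simp only [mem_Icc] at h1 h2
              rw [hW]
              simp only [ContinuousMap.sub_apply, ContinuousMap.add_apply,
                ContinuousMap.comp_apply, ContinuousMap.one_apply]
              rw [abs_le]
              exact ⟨by linarith, by linarith⟩
          · intro t ht i hi
            rcases Nat.lt_succ_iff_lt_or_eq.mp hi with hi' | hi'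
            · rw [Function.update_of_ne (Nat.ne_of_lt hi')]
              exact hvan t ((huv ⟨ht.1, lt_trans ht.2 (lt_trans hqaI.2 hxv)⟩).2) i hi'
            · subst hi'
              rw [Function.update_self]
              by_contra h
              exact (not_le.mpr ht.2) ((hWsupp t h).1)
          · intro t ht i hi
            rcases Nat.lt_succ_iff_lt_or_eq.mp hi with hi' | hi'
            · rw [Function.update_of_ne (Nat.ne_of_lt hi')]
              exact hest t ((huv ⟨ht.1, lt_trans ht.2 (lt_trans hqaI.2 hxv)⟩).2) i hi'
            · subst hi'
              rw [Function.update_self, hPW t]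
              have hρval : ρ (θ t) = 1 := hρ1 (le_of_lt ht.2 : θ t ∈ Iic qa)
              have hψval : ψ (θ t) ∈ Ioo (lam - 1/4) (lam + 1/4) :=
                (huv ⟨ht.1, lt_trans ht.2 (lt_trans hqaI.2 hxv)⟩).1
              simp only [mem_Ioo] at hψval
              rw [hρval]
              linarith [hψval.1]
  -- endgame
  set n : ℕ := ⌊4 * ‖P‖⌋₊ + 1 with hn
  obtain ⟨w, α, β, hαβ, hsub, hbnd, hvan, hest⟩ := key n
  obtain ⟨y, hy⟩ := hαβ
  obtain ⟨t, ht⟩ := hθs y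
  set f : C(K, ℝ) := ∑ i ∈ Finset.range n, w i with hf
  have hf1 : ‖f‖ ≤ 1 := by
    rw [ContinuousMap.norm_le _ zero_le_one]
    intro s
    have : f s = ∑ i ∈ Finset.range n, w i s := by
      rw [hf]; simp
    rw [Real.norm_eq_abs, this]
    exact hbnd s
  have hPf : (n : ℝ) / 4 ≤ P f t := by
    have hsum : P f t = ∑ i ∈ Finset.range n, P (w i) t := by
      rw [hf, map_sum]; simp
    rw [hsum]
    calc (n : ℝ) / 4 = ∑ _i ∈ Finset.range n, (1:ℝ)/4 := by
          rw [Finset.sum_const, Finset.card_range, nsmul_eq_mul]; push_cast; ring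
      _ ≤ ∑ i ∈ Finset.range n, P (w i) t := by
          refine Finset.sum_le_sum fun i hi => ?_
          exact hest t (by rw [ht]; exact hy) i (Finset.mem_range.mp hi)
  have hup : P f t ≤ ‖P‖ := by
    calc P f t ≤ ‖P f t‖ := le_abs_self _
      _ ≤ ‖P f‖ := (P f).norm_coe_le_norm t
      _ ≤ ‖P‖ * ‖f‖ := P.le_opNorm f
      _ ≤ ‖P‖ * 1 := by
          exact mul_le_mul_of_nonneg_left hf1 (norm_nonneg P)
      _ = ‖P‖ := mul_one _
  have hlt : 4 * ‖P‖ < (n : ℝ) := by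
    rw [hn]
    push_cast
    exact Nat.lt_floor_add_one _
  linarith
end

section
/- Let K be a compact linearly ordered space and f ∈ C(K). Then the set ess(f) of essential points of f is closed in K, and f is constant on every interval [a,b] with a, b ∈ ess(f), (a,b) ∩ ess(f) = ∅ and (a,b) ≠ ∅. -/
/-- `p` is irrelevant for `f`: `f` is constant on a suitable interval around `p`. -/
def Irrelevant {K : Type*} [TopologicalSpace K] [LinearOrder K]
    (f : C(K, ℝ)) (p : K) : Prop :=
  (IsBot p ∧ ∃ b : K, p < b ∧ ∀ x ∈ Set.Icc p b, f x = f p) ∨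
  (IsTop p ∧ ∃ a : K, a < p ∧ ∀ x ∈ Set.Icc a p, f x = f p) ∨
  (¬ IsBot p ∧ ¬ IsTop p ∧ ∃ a b : K, a < p ∧ p < b ∧ ∀ x ∈ Set.Icc a b, f x = f p)

section Aux

variable {K : Type*} [TopologicalSpace K] [LinearOrder K] [OrderTopology K] [CompactSpace K]

lemma const_on_closure (f : C(K, ℝ)) {S : Set K} {r : ℝ} (h : ∀ x ∈ S, f x = r)
    {s : K} (hs : s ∈ closure S) : f s = r := by
  have hsub : S ⊆ f ⁻¹' {r} := fun x hx => h x hx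
  have := closure_minimal hsub (IsClosed.preimage f.continuous isClosed_singleton)
  exact this hs

lemma right_const (f : C(K, ℝ)) {a b c : K} (hac : a < c) (hcb : c ≤ b)
    (hirr : ∀ p ∈ Set.Ioo a b, Irrelevant f p) :
    ∀ y ∈ Set.Icc c b, f y = f c := by
  set S : Set K := {x | x ∈ Set.Icc c b ∧ ∀ y ∈ Set.Icc c x, f y = f c} with hSdef
  have hSne : S.Nonempty := ⟨c, ⟨le_refl c, hcb⟩, fun y hy => by
    have : y = c := le_antisymm hy.2 hy.1
    rw [this]⟩
  have hSsub : S ⊆ Set.Icc c b := fun x hx => hx.1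
  have hclsub : closure S ⊆ Set.Icc c b := closure_minimal hSsub isClosed_Icc
  have hcpt : IsCompact (closure S) := isClosed_closure.isCompact
  obtain ⟨s, hsmem, hsub⟩ := hcpt.exists_isGreatest hSne.closure
  have hsIcc : s ∈ Set.Icc c b := hclsub hsmem
  have key : ∀ y ∈ Set.Icc c s, f y = f c := by
    intro y hy
    rcases eq_or_lt_of_le hy.2 with h | h
    · rw [h]
      exact const_on_closure f (fun x hx => hx.2 x ⟨hx.1.1, le_refl x⟩) hsmem
    · have hmem : ((Set.Ioi y) ∩ S).Nonempty := by
        rw [mem_closure_iff] at hsmem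
        exact hsmem _ isOpen_Ioi h
      obtain ⟨x, hx1, hx2⟩ := hmem
      exact hx2.2 y ⟨hy.1, le_of_lt hx1⟩
  have hsS : s ∈ S := ⟨hsIcc, key⟩
  rcases eq_or_lt_of_le hsIcc.2 with heq | hlt
  · intro y hy
    exact key y ⟨hy.1, hy.2.trans_eq heq.symm⟩
  · exfalso
    have hsab : s ∈ Set.Ioo a b := ⟨lt_of_lt_of_le hac hsIcc.1, hlt⟩
    rcases hirr s hsab with ⟨hb, _⟩ | ⟨ht, _⟩ | ⟨_, _, a', b', ha', hb', hconst⟩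
    · exact absurd (hb a) (not_le.2 hsab.1)
    · exact absurd (ht b) (not_le.2 hlt)
    · set t := min b' b with htdef
      have hst : s < t := lt_min hb' hlt
      have htS : t ∈ S := by
        refine ⟨⟨le_trans hsIcc.1 hst.le, min_le_right _ _⟩, fun y hy => ?_⟩
        rcases le_or_gt y s with h | h
        · exact key y ⟨hy.1, h⟩
        · have h1 : f y = f s :=
            hconst y ⟨le_of_lt (lt_trans ha' h), le_trans hy.2 (min_le_left _ _)⟩
          rw [h1]
          exact key s ⟨hsIcc.1, le_refl s⟩
      exact absurd (hsub (subset_closure htS)) (not_le.2 hst)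

lemma left_const (f : C(K, ℝ)) {a b c : K} (hac : a ≤ c) (hcb : c < b)
    (hirr : ∀ p ∈ Set.Ioo a b, Irrelevant f p) :
    ∀ y ∈ Set.Icc a c, f y = f c := by
  set S : Set K := {x | x ∈ Set.Icc a c ∧ ∀ y ∈ Set.Icc x c, f y = f c} with hSdef
  have hSne : S.Nonempty := ⟨c, ⟨hac, le_refl c⟩, fun y hy => by
    have : y = c := le_antisymm hy.2 hy.1
    rw [this]⟩
  have hSsub : S ⊆ Set.Icc a c := fun x hx => hx.1
  have hclsub : closure S ⊆ Set.Icc a c := closure_minimal hSsub isClosed_Icc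
  have hcpt : IsCompact (closure S) := isClosed_closure.isCompact
  obtain ⟨s, hsmem, hsub⟩ := hcpt.exists_isLeast hSne.closure
  have hsIcc : s ∈ Set.Icc a c := hclsub hsmem
  have key : ∀ y ∈ Set.Icc s c, f y = f c := by
    intro y hy
    rcases eq_or_lt_of_le hy.1 with h | h
    · rw [← h]
      exact const_on_closure f (fun x hx => hx.2 x ⟨le_refl x, hx.1.2⟩) hsmem
    · have hmem : ((Set.Iio y) ∩ S).Nonempty := by
        rw [mem_closure_iff] at hsmem
        exact hsmem _ isOpen_Iio h
      obtain ⟨x, hx1, hx2⟩ := hmem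
      exact hx2.2 y ⟨le_of_lt hx1, hy.2⟩
  have hsS : s ∈ S := ⟨hsIcc, key⟩
  rcases eq_or_lt_of_le hsIcc.1 with heq | hlt
  · intro y hy
    exact key y ⟨heq ▸ hy.1, hy.2⟩
  · exfalso
    have hsab : s ∈ Set.Ioo a b := ⟨hlt, lt_of_le_of_lt hsIcc.2 hcb⟩
    rcases hirr s hsab with ⟨hb, _⟩ | ⟨ht, _⟩ | ⟨_, _, a', b', ha', hb', hconst⟩
    · exact absurd (hb a) (not_le.2 hlt)
    · exact absurd (ht b) (not_le.2 hsab.2)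
    · set t := max a' a with htdef
      have hst : t < s := max_lt ha' hlt
      have htS : t ∈ S := by
        refine ⟨⟨le_max_right _ _, le_trans hst.le hsIcc.2⟩, fun y hy => ?_⟩
        rcases le_or_gt s y with h | h
        · exact key y ⟨h, hy.2⟩
        · have h1 : f y = f s :=
            hconst y ⟨le_trans (le_max_left _ _) hy.1, le_of_lt (lt_trans h hb')⟩
          rw [h1]
          exact key s ⟨le_refl s, hsIcc.2⟩
      exact absurd (hsub (subset_closure htS)) (not_le.2 hst)

end Aux

/-- ess(f) is closed, and f is constant on every interval [a,b] with essential endpoints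
whose nonempty interior misses ess(f). -/
theorem essential_set_closed_and_constancy
    {K : Type*} [TopologicalSpace K] [LinearOrder K] [OrderTopology K] [CompactSpace K]
    [Nonempty K] (f : C(K, ℝ)) :
    IsClosed {p : K | ¬ Irrelevant f p} ∧
    ∀ a b : K, ¬ Irrelevant f a → ¬ Irrelevant f b →
      Set.Ioo a b ∩ {p : K | ¬ Irrelevant f p} = ∅ → (Set.Ioo a b).Nonempty →
      ∀ x ∈ Set.Icc a b, f x = f a := by
  constructor
  · have hopen : IsOpen {p : K | Irrelevant f p} := by
      rw [isOpen_iff_forall_mem_open]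
      rintro p hp
      rcases hp with ⟨hbot, b, hpb, hconst⟩ | ⟨htop, a, hap, hconst⟩ |
        ⟨hnbot, hntop, a, b, hap, hpb, hconst⟩
      · refine ⟨Set.Iio b, ?_, isOpen_Iio, hpb⟩
        intro q hq
        have hpq : p ≤ q := hbot q
        by_cases hqb : IsBot q
        · left
          exact ⟨hqb, b, hq, fun x hx => by
            rw [hconst x ⟨le_trans hpq hx.1, hx.2⟩, hconst q ⟨hpq, le_of_lt hq⟩]⟩
        · right; right
          have hpq' : p < q := by
            rcases eq_or_lt_of_le hpq with h | h
            · exact absurd (h ▸ hbot) hqb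
            · exact h
          refine ⟨hqb, fun h => absurd (h b) (not_le.2 hq), p, b, hpq', hq,
            fun x hx => by rw [hconst x hx, hconst q ⟨hpq, le_of_lt hq⟩]⟩
      · refine ⟨Set.Ioi a, ?_, isOpen_Ioi, hap⟩
        intro q hq
        have hqp : q ≤ p := htop q
        by_cases hqt : IsTop q
        · right; left
          exact ⟨hqt, a, hq, fun x hx => by
            rw [hconst x ⟨hx.1, le_trans hx.2 hqp⟩, hconst q ⟨le_of_lt hq, hqp⟩]⟩
        · right; right
          have hqp' : q < p := by
            rcases eq_or_lt_of_le hqp with h | h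
            · exact absurd (h ▸ htop) hqt
            · exact h
          refine ⟨fun h => absurd (h a) (not_le.2 hq), hqt, a, p, hq, hqp',
            fun x hx => by rw [hconst x hx, hconst q ⟨le_of_lt hq, hqp⟩]⟩
      · refine ⟨Set.Ioo a b, ?_, isOpen_Ioo, hap, hpb⟩
        intro q hq
        right; right
        refine ⟨fun h => absurd (h a) (not_le.2 hq.1), fun h => absurd (h b) (not_le.2 hq.2),
          a, b, hq.1, hq.2, fun x hx => by
            rw [hconst x hx, hconst q ⟨le_of_lt hq.1, le_of_lt hq.2⟩]⟩
    have : {p : K | ¬ Irrelevant f p} = {p : K | Irrelevant f p}ᶜ := rfl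
    rw [this]
    exact hopen.isClosed_compl
  · intro a b _ _ hmiss hne
    have hirr : ∀ p ∈ Set.Ioo a b, Irrelevant f p := by
      intro p hp
      by_contra h
      have : p ∈ Set.Ioo a b ∩ {q : K | ¬ Irrelevant f q} := ⟨hp, h⟩
      rw [hmiss] at this
      exact this
    obtain ⟨c, hc⟩ := hne
    have hleft := left_const f (le_of_lt hc.1) hc.2 hirr
    have hright := right_const f hc.1 (le_of_lt hc.2) hirr
    have hfa : f a = f c := hleft a ⟨le_refl a, le_of_lt hc.1⟩
    intro x hx
    rcases le_or_gt x c with h | h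
    · rw [hleft x ⟨hx.1, h⟩, hfa]
    · rw [hright x ⟨le_of_lt h, hx.2⟩, hfa]
end

section
/- Let Y be a compact linearly ordered space and f : Y → ℝ a continuous increasing map such that each fiber f⁻¹(t) has at most two elements. Then Y is separable. -/
open Set

/-- A compact linearly ordered space admitting a continuous increasing real-valued map
with fibers of at most two points is separable. -/
theorem separable_of_two_to_one_into_real
    {Y : Type*} [TopologicalSpace Y] [LinearOrder Y] [OrderTopology Y] [CompactSpace Y]
    (f : Y → ℝ) (hmono : Monotone f) (hcont : Continuous f)
    (hfib : ∀ t : ℝ, (f ⁻¹' {t}).encard ≤ 2) :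
    TopologicalSpace.SeparableSpace Y := by
  rcases isEmpty_or_nonempty Y with hE | hNE
  · exact ⟨⟨∅, countable_empty, fun x => isEmptyElim x⟩⟩
  -- fibers are countable
  have hfin : ∀ t : ℝ, (f ⁻¹' {t}).Countable := fun t =>
    (Set.encard_ne_top_iff.mp (ne_top_of_le_ne_top (by simp) (hfib t))).countable
  -- the range of f
  set R : Set ℝ := Set.range f with hR
  -- a countable set c with closure containing R, consisting of points of R
  obtain ⟨s₀, hs₀c, hs₀d⟩ := TopologicalSpace.exists_countable_dense ↥R
  set c : Set ℝ := Subtype.val '' s₀ with hcdef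
  have hcR : c ⊆ R := by rintro q ⟨q', _, rfl⟩; exact q'.2
  have hc : ∀ u v : ℝ, (Set.Ioo u v ∩ R).Nonempty → (Set.Ioo u v ∩ c).Nonempty := by
    rintro u v ⟨x, hx, hxR⟩
    have hopen : IsOpen ((Subtype.val : R → ℝ) ⁻¹' Set.Ioo u v) :=
      isOpen_Ioo.preimage continuous_subtype_val
    obtain ⟨q, hq1, hq2⟩ := hs₀d.inter_open_nonempty _ hopen ⟨⟨x, hxR⟩, hx⟩
    exact ⟨q, hq1, ⟨q, hq2, rfl⟩⟩
  -- the gaps of R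
  set G : Set (ℝ × ℝ) :=
    {p | p.1 < p.2 ∧ p.1 ∈ R ∧ p.2 ∈ R ∧ Set.Ioo p.1 p.2 ∩ R = ∅} with hGdef
  have hGc : G.Countable := by
    apply Set.PairwiseDisjoint.countable_of_isOpen
      (s := fun p : ℝ × ℝ => Set.Ioo p.1 p.2) (a := G)
    · intro p hp q hq hne
      by_contra hnd
      rw [Set.not_disjoint_iff] at hnd
      obtain ⟨x, hxp, hxq⟩ := hnd
      have h1 : p.1 = q.1 := by
        rcases lt_trichotomy p.1 q.1 with h | h | h
        · exact (Set.eq_empty_iff_forall_notMem.mp hp.2.2.2 q.1 ⟨⟨h, hxq.1.trans hxp.2⟩, hq.2.1⟩).elim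
        · exact h
        · exact (Set.eq_empty_iff_forall_notMem.mp hq.2.2.2 p.1 ⟨⟨h, hxp.1.trans hxq.2⟩, hp.2.1⟩).elim
      have h2 : p.2 = q.2 := by
        rcases lt_trichotomy p.2 q.2 with h | h | h
        · exact (Set.eq_empty_iff_forall_notMem.mp hq.2.2.2 p.2 ⟨⟨hxq.1.trans hxp.2, h⟩, hp.2.2.1⟩).elim
        · exact h
        · exact (Set.eq_empty_iff_forall_notMem.mp hp.2.2.2 q.2 ⟨⟨hxp.1.trans hxq.2, h⟩, hq.2.2.1⟩).elim
      exact hne (Prod.ext h1 h2)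
    · exact fun p _ => isOpen_Ioo
    · exact fun p hp => Set.nonempty_Ioo.mpr hp.1
  -- extremes
  obtain ⟨ytop, htop⟩ := (isCompact_univ :
    IsCompact (Set.univ : Set Y)).exists_isGreatest ⟨Classical.arbitrary Y, trivial⟩
  obtain ⟨ybot, hbot⟩ := (isCompact_univ :
    IsCompact (Set.univ : Set Y)).exists_isLeast ⟨Classical.arbitrary Y, trivial⟩
  -- the candidate dense set
  set D : Set Y := (⋃ q ∈ c, f ⁻¹' {q}) ∪
      ((⋃ p ∈ G, f ⁻¹' {p.1} ∪ f ⁻¹' {p.2}) ∪ {ytop, ybot}) with hDdef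
  have hDcount : D.Countable := by
    refine Set.Countable.union (Set.Countable.biUnion (hs₀c.image _) fun q _ => hfin q)
      (Set.Countable.union (Set.Countable.biUnion hGc fun p _ =>
        (hfin p.1).union (hfin p.2)) ?_)
    exact (Set.countable_singleton ybot).insert ytop
  -- the main step: every nonempty open interval meets D
  have main : ∀ a b : Y, (Set.Ioo a b).Nonempty → (Set.Ioo a b ∩ D).Nonempty := by
    rintro a b ⟨z, hz⟩
    by_cases h : ∃ w ∈ Set.Ioo a b, f a < f w ∧ f w < f b
    · obtain ⟨w, hw, hw1, hw2⟩ := h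
      obtain ⟨q, hq, hqc⟩ := hc (f a) (f b) ⟨f w, ⟨hw1, hw2⟩, ⟨w, rfl⟩⟩
      obtain ⟨y, rfl⟩ := hcR hqc
      refine ⟨y, ⟨?_, ?_⟩, Or.inl (Set.mem_biUnion hqc rfl)⟩
      · exact lt_of_not_ge fun hle => absurd hq.1 (not_lt.mpr (hmono hle))
      · exact lt_of_not_ge fun hle => absurd hq.2 (not_lt.mpr (hmono hle))
    · push_neg at h
      have hza : f a ≤ f z := hmono hz.1.le
      have hzb : f z ≤ f b := hmono hz.2.le
      have hz' : f z = f a ∨ f z = f b := by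
        rcases eq_or_lt_of_le hza with he | hl
        · exact Or.inl he.symm
        · exact Or.inr (le_antisymm hzb (h z hz hl))
      have hab : f a < f b := by
        by_contra heq
        have hfb : f a = f b := le_antisymm (hza.trans hzb) (not_lt.mp heq)
        have hsub : ({a, z, b} : Set Y) ⊆ f ⁻¹' {f a} := by
          rintro x (rfl | rfl | rfl)
          · rfl
          · rcases hz' with h1 | h1
            · exact h1
            · exact h1.trans hfb.symm
          · exact hfb.symm
        have h3 : ({a, z, b} : Set Y).encard = 3 := by
          rw [Set.encard_insert_of_notMem, Set.encard_pair hz.2.ne]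
          · rfl
          · rintro (rfl | rfl)
            · exact absurd rfl hz.1.ne
            · exact absurd rfl (hz.1.trans hz.2).ne
        have := (h3 ▸ Set.encard_le_encard hsub).trans (hfib (f a))
        norm_num at this
      have hgap : Set.Ioo (f a) (f b) ∩ R = ∅ := by
        rw [Set.eq_empty_iff_forall_notMem]
        rintro x ⟨hx, y, rfl⟩
        have hay : a < y := lt_of_not_ge fun hle => absurd hx.1 (not_lt.mpr (hmono hle))
        have hyb : y < b := lt_of_not_ge fun hle => absurd hx.2 (not_lt.mpr (hmono hle))
        exact absurd (h y ⟨hay, hyb⟩ hx.1) (not_le.mpr hx.2)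
      have hG : ((f a, f b) : ℝ × ℝ) ∈ G := ⟨hab, ⟨a, rfl⟩, ⟨b, rfl⟩, hgap⟩
      refine ⟨z, hz, Or.inr (Or.inl (Set.mem_biUnion hG ?_))⟩
      rcases hz' with h1 | h1
      · exact Or.inl h1
      · exact Or.inr h1
  -- conclude density
  refine ⟨⟨D, hDcount, ?_⟩⟩
  rw [dense_iff_inter_open]
  intro U hU hUne
  obtain ⟨y, hy⟩ := hUne
  by_cases hyt : ∃ u, y < u
  · by_cases hyl : ∃ l, l < y
    · obtain ⟨l, u, hy_mem, hsub⟩ :=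
        (mem_nhds_iff_exists_Ioo_subset' hyl hyt).mp (hU.mem_nhds hy)
      obtain ⟨w, hw, hwD⟩ := main l u ⟨y, hy_mem⟩
      exact ⟨w, hsub hw, hwD⟩
    · push_neg at hyl
      have : y = ybot := le_antisymm (hyl ybot) (hbot.2 trivial)
      exact ⟨y, hy, Or.inr (Or.inr (by rw [this]; exact Or.inr rfl))⟩
  · push_neg at hyt
    have : y = ytop := le_antisymm (htop.2 trivial) (hyt ytop)
    exact ⟨y, hy, Or.inr (Or.inr (by rw [this]; exact Or.inl rfl))⟩
end
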